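/- arXiv:0811.1766 — 8 statements merged into one kernel-verified Lean document; each statement's English description precedes it below -/
import Mathlib

section
/- Let n ≥ 2, let L be a real symmetric n×n matrix all of whose rows sum to zero such that the submatrix L̃ (obtained by deleting the last row and column) is invertible, and let R be the associated effective-resistance matrix. Then every entry of the matrix I + (1/2)·L·R in row i equals 1 + (1/2)·Σ_k L_{i,k} R_{i,k}; in particular, within each row of I + (1/2)·L·R all entries are equal. -/
open Matrix BigOperators

/-- Let `n ≥ 2`, let `L` be a real symmetric `n×n` matrix with all row
sums zero, such that the submatrix `Ltil` obtained by deleting the last row and column is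
invertible, and let `R` be the associated effective-resistance matrix,
`R i j = Linv i i + Linv j j - 2 Linv i j` where `Linv` is the inverse of `Ltil` extended
by zeros in the last row and column.  Then every entry of `I + (1/2)·L·R` in row `i`
equals `1 + (1/2)·∑ k, L i k * R i k`; in particular all entries within a row agree. -/
theorem rows_of_id_add_half_LR_constant (n : ℕ) (hn : 2 ≤ n)
    (L : Matrix (Fin n) (Fin n) ℝ)
    (hsymm : L.IsSymm)
    (hrow : ∀ i, ∑ j, L i j = 0)
    (Ltil : Matrix (Fin (n-1)) (Fin (n-1)) ℝ)
    (hLtil : ∀ i j : Fin (n-1), Ltil i j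
      = L (Fin.castLE (Nat.sub_le n 1) i) (Fin.castLE (Nat.sub_le n 1) j))
    (hinv : IsUnit Ltil)
    (Linv : Matrix (Fin n) (Fin n) ℝ)
    (hLinv : ∀ i j : Fin n, Linv i j =
      if h : (i : ℕ) < n - 1 ∧ (j : ℕ) < n - 1
      then Ltil⁻¹ ⟨i, h.1⟩ ⟨j, h.2⟩ else 0)
    (R : Matrix (Fin n) (Fin n) ℝ)
    (hR : ∀ i j, R i j = Linv i i + Linv j j - 2 * Linv i j) :
    ∀ i j : Fin n, ((1 : Matrix (Fin n) (Fin n) ℝ) + (1/2 : ℝ) • (L * R)) i j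
      = 1 + (1/2 : ℝ) * ∑ k, L i k * R i k := by
  obtain ⟨m, rfl⟩ : ∃ m, n = m + 1 := ⟨n - 1, by omega⟩
  simp only [Nat.add_sub_cancel] at hLtil hLinv
  have hsymm' : ∀ a b : Fin (m+1), L a b = L b a := fun a b => (hsymm.apply a b).symm
  -- column sums are zero
  have hcol : ∀ b : Fin (m+1), ∑ k, L k b = 0 := by
    intro b
    rw [← hrow b]
    exact Finset.sum_congr rfl fun k _ => hsymm' k b
  -- Ltil * Ltil⁻¹ = 1, entrywise over Fin m
  have hmul : ∀ a b : Fin m, (∑ k : Fin m, Ltil a k * Ltil⁻¹ k b)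
      = if a = b then (1:ℝ) else 0 := by
    intro a b
    have h1 : Ltil * Ltil⁻¹ = 1 :=
      Matrix.mul_nonsing_inv _ ((Matrix.isUnit_iff_isUnit_det _).mp hinv)
    have := congrFun (congrFun h1 a) b
    rw [Matrix.mul_apply, Matrix.one_apply] at this
    exact this
  -- symmetry of Ltil⁻¹
  have hTsymm : ∀ a b : Fin m, Ltil⁻¹ a b = Ltil⁻¹ b a := by
    intro a b
    have hts : Ltilᵀ = Ltil := by
      ext x y
      rw [Matrix.transpose_apply, hLtil, hLtil]
      exact hsymm' _ _
    have h2 : (Ltil⁻¹)ᵀ = Ltil⁻¹ := by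
      rw [Matrix.transpose_nonsing_inv, hts]
    have h3 := congrFun (congrFun h2 b) a
    rw [Matrix.transpose_apply] at h3
    exact h3
  have hLinvS : ∀ a b : Fin (m+1), Linv a b = Linv b a := by
    intro a b
    rw [hLinv, hLinv]
    by_cases h : (a : ℕ) < m ∧ (b : ℕ) < m
    · rw [dif_pos h, dif_pos ⟨h.2, h.1⟩]; exact hTsymm _ _
    · rw [dif_neg h, dif_neg (fun h' => h ⟨h'.2, h'.1⟩)]
  -- identify L entries with Ltil entries
  have hLe : ∀ (a : Fin (m+1)) (ha : (a:ℕ) < m) (k : Fin m),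
      L a (Fin.castSucc k) = Ltil ⟨a, ha⟩ k := by
    intro a ha k
    rw [hLtil]
    congr 1
  -- Linv entries
  have hLinv1 : ∀ (k : Fin m) (b : Fin (m+1)) (hb : (b:ℕ) < m),
      Linv (Fin.castSucc k) b = Ltil⁻¹ k ⟨b, hb⟩ := by
    intro k b hb
    rw [hLinv, dif_pos ⟨by simp, hb⟩]
    congr 1
  have hLinv0 : ∀ (a b : Fin (m+1)), ¬ ((a:ℕ) < m ∧ (b:ℕ) < m) → Linv a b = 0 := by
    intro a b h
    rw [hLinv, dif_neg h]
  -- the key computation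
  have key : ∀ a b : Fin (m+1), (∑ k, L a k * Linv k b)
      = if (b:ℕ) < m then (if (a:ℕ) < m then (if a = b then (1:ℝ) else 0) else -1) else 0 := by
    intro a b
    by_cases hb : (b:ℕ) < m
    · rw [if_pos hb, Fin.sum_univ_castSucc]
      have hlast : Linv (Fin.last m) b = 0 := by
        apply hLinv0
        intro h
        have := h.1
        rw [Fin.val_last] at this
        omega
      rw [hlast, mul_zero, add_zero]
      by_cases ha : (a:ℕ) < m
      · rw [if_pos ha]
        have : (∑ k : Fin m, L a (Fin.castSucc k) * Linv (Fin.castSucc k) b)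
            = ∑ k : Fin m, Ltil ⟨a, ha⟩ k * Ltil⁻¹ k ⟨b, hb⟩ := by
          refine Finset.sum_congr rfl fun k _ => ?_
          rw [hLe a ha k, hLinv1 k b hb]
        rw [this, hmul]
        have hiff : (⟨(a:ℕ), ha⟩ : Fin m) = ⟨(b:ℕ), hb⟩ ↔ a = b := by
          simp [Fin.ext_iff]
        simp only [hiff]
      · rw [if_neg ha]
        have ham : (a : ℕ) = m := by omega
        have halast : a = Fin.last m := Fin.ext (by simpa using ham)
        -- L a (castSucc k) = - ∑ x : Fin m, L (castSucc x) (castSucc k)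
        have hLlast : ∀ k : Fin m, L a (Fin.castSucc k)
            = - ∑ x : Fin m, L (Fin.castSucc x) (Fin.castSucc k) := by
          intro k
          have h0 := hcol (Fin.castSucc k)
          rw [Fin.sum_univ_castSucc, ← halast] at h0
          linarith
        calc (∑ k : Fin m, L a (Fin.castSucc k) * Linv (Fin.castSucc k) b)
            = ∑ k : Fin m, (- ∑ x : Fin m, Ltil x k * Ltil⁻¹ k ⟨b, hb⟩) := by
              refine Finset.sum_congr rfl fun k _ => ?_
              rw [hLlast k, hLinv1 k b hb, neg_mul, Finset.sum_mul]
              congr 1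
              refine Finset.sum_congr rfl fun x _ => ?_
              congr 1
              rw [hLe (Fin.castSucc x) (by simp) k]
              congr 1
          _ = - ∑ k : Fin m, ∑ x : Fin m, Ltil x k * Ltil⁻¹ k ⟨b, hb⟩ := by
              rw [Finset.sum_neg_distrib]
          _ = - ∑ x : Fin m, ∑ k : Fin m, Ltil x k * Ltil⁻¹ k ⟨b, hb⟩ := by
              rw [Finset.sum_comm]
          _ = -1 := by
              have : ∀ x : Fin m, (∑ k : Fin m, Ltil x k * Ltil⁻¹ k ⟨b, hb⟩)
                  = if x = ⟨b, hb⟩ then (1:ℝ) else 0 := fun x => hmul x ⟨b, hb⟩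
              rw [Finset.sum_congr rfl fun x _ => this x]
              simp
    · rw [if_neg hb]
      have : ∀ k : Fin (m+1), L a k * Linv k b = 0 := by
        intro k
        rw [hLinv0 k b (fun h => hb h.2), mul_zero]
      rw [Finset.sum_congr rfl fun k _ => this k]
      simp
  -- now the main computation
  intro i j
  have expand : ∀ a b : Fin (m+1),
      (∑ k, L a k * (Linv k k + Linv b b - 2 * Linv k b))
        = (∑ k, L a k * Linv k k) - 2 * ∑ k, L a k * Linv k b := by
    intro a b
    have h1 : ∀ k : Fin (m+1), L a k * (Linv k k + Linv b b - 2 * Linv k b)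
        = L a k * Linv k k + L a k * Linv b b - 2 * (L a k * Linv k b) := fun k => by ring
    rw [Finset.sum_congr rfl fun k _ => h1 k, Finset.sum_sub_distrib,
      Finset.sum_add_distrib, ← Finset.sum_mul, hrow a, zero_mul, add_zero,
      ← Finset.mul_sum]
  simp only [Matrix.add_apply, Matrix.smul_apply, Matrix.one_apply, smul_eq_mul,
    Matrix.mul_apply]
  have hRrw : ∀ a b : Fin (m+1), R a b = Linv a a + Linv b b - 2 * Linv a b := hR
  have lhs : (∑ k, L i k * R k j) = (∑ k, L i k * Linv k k) - 2 * ∑ k, L i k * Linv k j := by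
    rw [Finset.sum_congr rfl fun k _ => by rw [hRrw k j]]
    exact expand i j
  have rhs : (∑ k, L i k * R i k) = (∑ k, L i k * Linv k k) - 2 * ∑ k, L i k * Linv k i := by
    have h1 : ∀ k : Fin (m+1), L i k * R i k = L i k * (Linv k k + Linv i i - 2 * Linv k i) := by
      intro k
      rw [hRrw i k, hLinvS i k]
      ring
    rw [Finset.sum_congr rfl fun k _ => h1 k]
    exact expand i i
  have key2 : (∑ k, L i k * Linv k i) = if (i:ℕ) < m then (1:ℝ) else 0 := by
    rw [key i i]
    by_cases hi : (i:ℕ) < m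
    · rw [if_pos hi, if_pos hi, if_pos hi, if_pos rfl]
    · rw [if_neg hi, if_neg hi]
  rw [lhs, rhs, key i j, key2]
  have hvi := i.isLt
  have hvj := j.isLt
  by_cases hi : (i:ℕ) < m <;> by_cases hj : (j:ℕ) < m
  · by_cases hij : i = j
    · rw [if_pos hj, if_pos hi, if_pos hi, if_pos hij]
    · rw [if_pos hj, if_pos hi, if_pos hi, if_neg hij]; ring
  · have hij : i ≠ j := fun h => hj (h ▸ hi)
    rw [if_neg hj, if_pos hi, if_neg hij]; ring
  · have hij : i ≠ j := fun h => hi (h ▸ hj)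
    rw [if_pos hj, if_neg hi, if_neg hi, if_neg hij]; ring
  · have hij : i = j := Fin.ext (by omega)
    rw [if_neg hj, if_neg hi, if_pos hij]
end

section
/- Let n ≥ 2, let L be a real symmetric n×n matrix all of whose rows sum to zero such that the submatrix L̃ (obtained by deleting the last row and column) is invertible, and let R be the associated effective-resistance matrix. Then all diagonal entries of the matrix R·L·R are equal; more precisely, for every index i one has (R L R)_{i,i} = Σ_{j,k} (L̃^{-1})_{j,j} L_{j,k} (L̃^{-1})_{k,k}, a quantity independent of i. -/
open Matrix BigOperators

/-- With `L`, `Ltil`, `Linv`, `R` as in the effective-resistance setup,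
all diagonal entries of `R·L·R` are equal; specifically each equals
`∑ j, ∑ k, Linv j j * L j k * Linv k k`, a quantity independent of the index. -/
theorem diag_of_RLR_constant (n : ℕ) (hn : 2 ≤ n)
    (L : Matrix (Fin n) (Fin n) ℝ)
    (hsymm : L.IsSymm)
    (hrow : ∀ i, ∑ j, L i j = 0)
    (Ltil : Matrix (Fin (n-1)) (Fin (n-1)) ℝ)
    (hLtil : ∀ i j : Fin (n-1), Ltil i j
      = L (Fin.castLE (Nat.sub_le n 1) i) (Fin.castLE (Nat.sub_le n 1) j))
    (hinv : IsUnit Ltil)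
    (Linv : Matrix (Fin n) (Fin n) ℝ)
    (hLinv : ∀ i j : Fin n, Linv i j =
      if h : (i : ℕ) < n - 1 ∧ (j : ℕ) < n - 1
      then Ltil⁻¹ ⟨i, h.1⟩ ⟨j, h.2⟩ else 0)
    (R : Matrix (Fin n) (Fin n) ℝ)
    (hR : ∀ i j, R i j = Linv i i + Linv j j - 2 * Linv i j) :
    ∀ i : Fin n, (R * L * R) i i = ∑ j, ∑ k, Linv j j * L j k * Linv k k := by
  obtain ⟨m, rfl⟩ : ∃ m, n = m + 1 := ⟨n - 1, by omega⟩
  have hdet : IsUnit Ltil.det := (Matrix.isUnit_iff_isUnit_det Ltil).mp hinv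
  have hinvmul : Ltil⁻¹ * Ltil = 1 := Matrix.nonsing_inv_mul Ltil hdet
  have hLsym : ∀ a b, L a b = L b a := fun a b => (congrFun (congrFun hsymm b) a)
  have hcol : ∀ k, ∑ j, L j k = 0 := by
    intro k
    rw [Finset.sum_congr rfl fun j _ => hLsym j k]
    exact hrow k
  have hMcc : ∀ j k : Fin m, Linv (Fin.castSucc j) (Fin.castSucc k) = Ltil⁻¹ j k := by
    intro j k
    rw [hLinv]
    exact dif_pos ⟨j.isLt, k.isLt⟩
  have hMlastR : ∀ j : Fin (m+1), Linv j (Fin.last m) = 0 := by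
    intro j; rw [hLinv]; exact dif_neg (by simp)
  have hMlastL : ∀ j : Fin (m+1), Linv (Fin.last m) j = 0 := by
    intro j; rw [hLinv]; exact dif_neg (by simp)
  have hTsym : Ltil⁻¹ = (Ltil⁻¹)ᵀ := by
    have h1 : Ltilᵀ = Ltil := by
      ext a b; rw [Matrix.transpose_apply, hLtil, hLtil]; exact hLsym _ _
    rw [Matrix.transpose_nonsing_inv, h1]
  have hMsym : ∀ a b : Fin (m+1), Linv a b = Linv b a := by
    intro a b
    induction a using Fin.lastCases with
    | last => rw [hMlastL, hMlastR]
    | cast a' =>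
      induction b using Fin.lastCases with
      | last => rw [hMlastR, hMlastL]
      | cast b' =>
        rw [hMcc, hMcc]
        exact congrFun (congrFun hTsym a') b'
  have hrow' : ∀ j : Fin (m+1), L j (Fin.last m) = - ∑ k : Fin m, L j (Fin.castSucc k) := by
    intro j
    have h := hrow j
    rw [Fin.sum_univ_castSucc] at h
    linarith
  have hLtil' : ∀ j k : Fin m, L (Fin.castSucc j) (Fin.castSucc k) = Ltil j k :=
    fun j k => (hLtil j k).symm
  -- Key lemma: (Linv * L) row from a non-last index
  have hS : ∀ (i' : Fin m) (k : Fin (m+1)),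
      ∑ j, Linv (Fin.castSucc i') j * L j k
        = (if Fin.castSucc i' = k then (1:ℝ) else 0) - (if k = Fin.last m then 1 else 0) := by
    intro i' k
    rw [Fin.sum_univ_castSucc, hMlastR, zero_mul, add_zero]
    have hsum : ∀ k' : Fin m,
        ∑ j : Fin m, Linv (Fin.castSucc i') (Fin.castSucc j) * L (Fin.castSucc j) (Fin.castSucc k')
          = if i' = k' then (1:ℝ) else 0 := by
      intro k'
      have h1 : (Ltil⁻¹ * Ltil) i' k' = if i' = k' then (1:ℝ) else 0 := by
        rw [hinvmul, Matrix.one_apply]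
      rw [← h1, Matrix.mul_apply]
      exact Finset.sum_congr rfl fun j _ => by rw [hMcc, hLtil']
    induction k using Fin.lastCases with
    | last =>
      have e1 : ∑ j : Fin m, Linv (Fin.castSucc i') (Fin.castSucc j) * L (Fin.castSucc j) (Fin.last m)
          = ∑ j : Fin m, ∑ k' : Fin m,
              -(Linv (Fin.castSucc i') (Fin.castSucc j) * L (Fin.castSucc j) (Fin.castSucc k')) := by
        refine Finset.sum_congr rfl fun j _ => ?_
        rw [hrow' (Fin.castSucc j), mul_neg, Finset.mul_sum, Finset.sum_neg_distrib]
      rw [e1, Finset.sum_comm]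
      have e2 : ∀ k' : Fin m, ∑ j : Fin m,
          -(Linv (Fin.castSucc i') (Fin.castSucc j) * L (Fin.castSucc j) (Fin.castSucc k'))
            = -(if i' = k' then (1:ℝ) else 0) := by
        intro k'
        rw [Finset.sum_neg_distrib, hsum]
      rw [Finset.sum_congr rfl fun k' _ => e2 k', Finset.sum_neg_distrib, Finset.sum_ite_eq]
      have hne : ¬ Fin.castSucc i' = Fin.last m := by
        simp [Fin.ext_iff]; omega
      simp [hne]
    | cast k' =>
      rw [hsum k']
      have h2 : ¬ Fin.castSucc k' = Fin.last m := by
        simp [Fin.ext_iff]; omega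
      simp [h2, Fin.castSucc_inj]
  intro i
  simp only [Matrix.mul_apply]
  induction i using Fin.lastCases with
  | last =>
    have hA1 : (∑ k, (∑ j, Linv j j * L j k) * Linv k k)
        = ∑ j, ∑ k, Linv j j * L j k * Linv k k := by
      simp only [Finset.sum_mul]
      exact Finset.sum_comm
    calc ∑ k, (∑ j, R (Fin.last m) j * L j k) * R k (Fin.last m)
        = ∑ k, (∑ j, Linv j j * L j k) * Linv k k := by
          refine Finset.sum_congr rfl fun k _ => ?_
          have h1 : ∀ j, R (Fin.last m) j = Linv j j := by
            intro j; rw [hR, hMlastL, hMlastL]; ring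
          have h2 : R k (Fin.last m) = Linv k k := by
            rw [hR, hMlastL, hMlastR]; ring
          rw [h2]
          congr 1
          exact Finset.sum_congr rfl fun j _ => by rw [h1]
      _ = ∑ j, ∑ k, Linv j j * L j k * Linv k k := hA1
  | cast i' =>
    have hpick : ∀ f : Fin (m+1) → ℝ,
        ∑ k, ((if Fin.castSucc i' = k then (1:ℝ) else 0) - (if k = Fin.last m then 1 else 0)) * f k
          = f (Fin.castSucc i') - f (Fin.last m) := by
      intro f
      simp [sub_mul, Finset.sum_sub_distrib, ite_mul, one_mul, zero_mul,
        Finset.sum_ite_eq, Finset.sum_ite_eq']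
    have hT : ∀ k, ∑ j, R (Fin.castSucc i') j * L j k
        = (∑ j, Linv j j * L j k)
          - 2 * ((if Fin.castSucc i' = k then (1:ℝ) else 0) - (if k = Fin.last m then 1 else 0)) := by
      intro k
      have e1 : ∑ j, R (Fin.castSucc i') j * L j k
          = Linv (Fin.castSucc i') (Fin.castSucc i') * (∑ j, L j k)
            + (∑ j, Linv j j * L j k) - 2 * (∑ j, Linv (Fin.castSucc i') j * L j k) := by
        rw [Finset.mul_sum, Finset.mul_sum, ← Finset.sum_add_distrib, ← Finset.sum_sub_distrib]
        exact Finset.sum_congr rfl fun j _ => by rw [hR]; ring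
      rw [e1, hcol, mul_zero, zero_add, hS]
    have hS' : ∀ j : Fin (m+1), ∑ k, L j k * Linv k (Fin.castSucc i')
        = (if Fin.castSucc i' = j then (1:ℝ) else 0) - (if j = Fin.last m then 1 else 0) := by
      intro j
      rw [← hS i' j]
      exact Finset.sum_congr rfl fun k _ => by rw [hLsym j k, hMsym k (Fin.castSucc i')]; ring
    have hA1 : (∑ k, (∑ j, Linv j j * L j k) * Linv k k)
        = ∑ j, ∑ k, Linv j j * L j k * Linv k k := by
      simp only [Finset.sum_mul]
      exact Finset.sum_comm
    have hA2 : (∑ k, ∑ j, Linv j j * L j k) = 0 := by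
      rw [Finset.sum_comm]
      refine Finset.sum_eq_zero fun j _ => ?_
      rw [← Finset.mul_sum, hrow, mul_zero]
    have hA3 : (∑ k, (∑ j, Linv j j * L j k) * Linv k (Fin.castSucc i'))
        = Linv (Fin.castSucc i') (Fin.castSucc i') := by
      have e1 : ∀ k, (∑ j, Linv j j * L j k) * Linv k (Fin.castSucc i')
          = ∑ j, Linv j j * (L j k * Linv k (Fin.castSucc i')) := by
        intro k; rw [Finset.sum_mul]; exact Finset.sum_congr rfl fun j _ => by ring
      rw [Finset.sum_congr rfl fun k _ => e1 k, Finset.sum_comm]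
      have e2 : ∀ j, ∑ k, Linv j j * (L j k * Linv k (Fin.castSucc i'))
          = ((if Fin.castSucc i' = j then (1:ℝ) else 0) - (if j = Fin.last m then 1 else 0))
              * Linv j j := by
        intro j; rw [← Finset.mul_sum, hS']; ring
      rw [Finset.sum_congr rfl fun j _ => e2 j, hpick (fun j => Linv j j), hMlastL, sub_zero]
    have hA4 : (∑ k, ((if Fin.castSucc i' = k then (1:ℝ) else 0)
          - (if k = Fin.last m then 1 else 0)) * Linv k k)
        = Linv (Fin.castSucc i') (Fin.castSucc i') := by
      rw [hpick (fun k => Linv k k), hMlastL, sub_zero]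
    have hA5 : (∑ k, ((if Fin.castSucc i' = k then (1:ℝ) else 0)
          - (if k = Fin.last m then 1 else 0))) = 0 := by
      have h := hpick (fun _ => (1:ℝ))
      simp only [mul_one] at h
      rw [h]
      norm_num
    have hA6 : (∑ k, ((if Fin.castSucc i' = k then (1:ℝ) else 0)
          - (if k = Fin.last m then 1 else 0)) * Linv k (Fin.castSucc i'))
        = Linv (Fin.castSucc i') (Fin.castSucc i') := by
      rw [hpick (fun k => Linv k (Fin.castSucc i')), hMlastL, sub_zero]
    calc ∑ k, (∑ j, R (Fin.castSucc i') j * L j k) * R k (Fin.castSucc i')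
        = ∑ k, ((∑ j, Linv j j * L j k) * Linv k k
            + Linv (Fin.castSucc i') (Fin.castSucc i') * (∑ j, Linv j j * L j k)
            - 2 * ((∑ j, Linv j j * L j k) * Linv k (Fin.castSucc i'))
            - 2 * (((if Fin.castSucc i' = k then (1:ℝ) else 0)
                - (if k = Fin.last m then 1 else 0)) * Linv k k)
            - (2 * Linv (Fin.castSucc i') (Fin.castSucc i'))
                * ((if Fin.castSucc i' = k then (1:ℝ) else 0)
                - (if k = Fin.last m then 1 else 0))
            + 4 * (((if Fin.castSucc i' = k then (1:ℝ) else 0)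
                - (if k = Fin.last m then 1 else 0)) * Linv k (Fin.castSucc i'))) := by
          refine Finset.sum_congr rfl fun k _ => ?_
          rw [hT, hR]
          ring
      _ = (∑ k, (∑ j, Linv j j * L j k) * Linv k k)
            + Linv (Fin.castSucc i') (Fin.castSucc i') * (∑ k, ∑ j, Linv j j * L j k)
            - 2 * (∑ k, (∑ j, Linv j j * L j k) * Linv k (Fin.castSucc i'))
            - 2 * (∑ k, ((if Fin.castSucc i' = k then (1:ℝ) else 0)
                - (if k = Fin.last m then 1 else 0)) * Linv k k)
            - (2 * Linv (Fin.castSucc i') (Fin.castSucc i'))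
                * (∑ k, ((if Fin.castSucc i' = k then (1:ℝ) else 0)
                - (if k = Fin.last m then 1 else 0)))
            + 4 * (∑ k, ((if Fin.castSucc i' = k then (1:ℝ) else 0)
                - (if k = Fin.last m then 1 else 0)) * Linv k (Fin.castSucc i')) := by
          simp only [Finset.sum_add_distrib, Finset.sum_sub_distrib, ← Finset.mul_sum]
      _ = ∑ j, ∑ k, Linv j j * L j k * Linv k k := by
          rw [hA1, hA2, hA3, hA4, hA5, hA6]
          ring
end

section
/- Let n ≥ 2, let L be a real symmetric n×n matrix all of whose rows sum to zero such that the submatrix L̃ (obtained by deleting the last row and column) is invertible, and let R be the associated effective-resistance matrix. Consider the n×n matrix t·J − (1/2)·R, where J is the all-ones matrix and t is an indeterminate; its determinant is a polynomial of degree at most 1 in t. Then the coefficient of t in det(t·J − (1/2)·R) equals 1/det(L̃). -/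
/-!
Conjugating `t • J - R / 2` by the unimodular matrix that subtracts the last row from the other
rows (and the last column from the other columns) leaves `t` only in the corner entry, and turns
the remaining constant entries into the double differences
`-(R i j - R i n - R n j + R n n) / 2 = L̃⁻¹ i j`. Expanding the determinant along the last row,
the coefficient of `t` is the corner cofactor `det L̃⁻¹ = 1 / det L̃`.
-/

open Matrix Polynomial

namespace Matrix

variable {ι R : Type*} [Fintype ι] [DecidableEq ι] [CommRing R]

theorem det_add_smul_single (A : Matrix ι ι R) (i j : ι) (t : R) :
    (A + t • single i j 1).det = A.det + t * A.adjugate j i := by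
  have hrow : A + t • single i j 1 = A.updateRow i (A i + t • Pi.single j 1) := by
    ext k l
    by_cases hk : k = i
    · subst hk; simp [single_apply, Pi.single_apply, eq_comm]
    · simp [hk, Ne.symm hk]
  rw [hrow, det_updateRow_add, updateRow_eq_self, det_updateRow_smul, adjugate_apply]

theorem det_eq_of_forall_row_col_eq_smul_add_const {A B : Matrix ι ι R} (c : ι → R) (k : ι)
    (hk : c k = 0)
    (hA : ∀ i j, A i j = B i j + c i * B k j + c j * B i k + c i * c j * B k k) :
    A.det = B.det := by
  let B₁ : Matrix ι ι R := of fun i j => B i j + c i * B k j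
  have hrow : B₁.det = B.det := det_eq_of_forall_row_eq_smul_add_const c k hk fun _ _ => rfl
  have hcol : Aᵀ.det = B₁ᵀ.det :=
    det_eq_of_forall_row_eq_smul_add_const c k hk fun i j => by
      simp only [transpose_apply, B₁, of_apply, hA]; ring
  rwa [det_transpose, det_transpose, hrow] at hcol

end Matrix

open Matrix

theorem Polynomial.coeff_one_det_X_add_C {K : Type*} [CommRing K] {m : ℕ}
    (S : Matrix (Fin (m + 1)) (Fin (m + 1)) K) :
    (det (of fun i j => (X : K[X]) + C (S i j))).coeff 1 =
      det (of fun i j : Fin m => S i.castSucc j.castSucc - S i.castSucc (Fin.last m)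
        - S (Fin.last m) j.castSucc + S (Fin.last m) (Fin.last m)) := by
  set l := Fin.last m
  let c : Fin (m + 1) → K := fun i => if i = l then 0 else -1
  let D : Matrix (Fin (m + 1)) (Fin (m + 1)) K :=
    of fun i j => S i j + c i * S l j + c j * S i l + c i * c j * S l l
  have hreduce : det (of fun i j => (X : K[X]) + C (S i j)) =
      det (D.map C + (X : K[X]) • single l l 1) := by
    refine (det_eq_of_forall_row_col_eq_smul_add_const (fun i => (C (c i) : K[X])) l
      (by simp [c]) fun i j => ?_).symm
    rcases eq_or_ne i l with rfl | hi <;> rcases eq_or_ne j l with rfl | hj <;>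
      simp [*, D, c, Ne.symm] <;> ring
  have hmap : (D.map C).adjugate l l = C (D.adjugate l l) := by
    rw [← RingHom.mapMatrix_apply, ← RingHom.map_adjugate, RingHom.mapMatrix_apply, map_apply]
  rw [hreduce, det_add_smul_single, ← RingHom.mapMatrix_apply, ← RingHom.map_det,
    RingHom.mapMatrix_apply, hmap, coeff_add, coeff_C, coeff_X_mul, coeff_C_zero,
    if_neg one_ne_zero, zero_add, adjugate_fin_succ_eq_det_submatrix, Even.neg_one_pow ⟨l, rfl⟩,
    one_mul, Fin.succAbove_last]
  congr 1
  ext i j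
  simp only [D, c, l, submatrix_apply, of_apply, Fin.castSucc_ne_last, if_false]
  ring

theorem coeff_one_det_tJ_sub_half_R_general (n : ℕ) (hn : 2 ≤ n)
    (Ltil : Matrix (Fin (n-1)) (Fin (n-1)) ℝ)
    (Linv : Matrix (Fin n) (Fin n) ℝ)
    (hLinv : ∀ i j : Fin n, Linv i j =
      if h : (i : ℕ) < n - 1 ∧ (j : ℕ) < n - 1
      then Ltil⁻¹ ⟨i, h.1⟩ ⟨j, h.2⟩ else 0)
    (R : Matrix (Fin n) (Fin n) ℝ)
    (hR : ∀ i j, R i j = Linv i i + Linv j j - 2 * Linv i j) :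
    (Matrix.det (Matrix.of fun i j : Fin n =>
        (Polynomial.X : Polynomial ℝ) - Polynomial.C (R i j / 2))).coeff 1
      = 1 / Ltil.det := by
  obtain ⟨m, rfl⟩ : ∃ m, n = m + 1 := ⟨n - 1, by omega⟩
  have hLinv_last_left : ∀ j, Linv (Fin.last m) j = 0 := fun j => by simp [hLinv]
  have hLinv_last_right : ∀ i, Linv i (Fin.last m) = 0 := fun i => by simp [hLinv]
  have hLinv_castSucc : ∀ i j : Fin m, Linv i.castSucc j.castSucc = Ltil⁻¹ i j := fun i j => by
    simp [hLinv]
  calc (det (of fun i j => X - C (R i j / 2))).coeff 1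
      = (det (of fun i j => X + C (-(R i j / 2)))).coeff 1 := by
        simp only [map_neg, sub_eq_add_neg]
    _ = det Ltil⁻¹ := by
      refine (coeff_one_det_X_add_C (of fun i j => -(R i j / 2))).trans (congrArg det ?_)
      ext i j
      simp only [of_apply, hR, hLinv_last_left, hLinv_last_right, hLinv_castSucc]
      ring
    _ = 1 / Ltil.det := by rw [det_nonsing_inv, Ring.inverse_eq_inv', one_div]

/-- With `L`, `Ltil`, `Linv`, `R` as in the effective-resistance setup,
the determinant of the matrix `t·J − (1/2)·R` (whose `(i,j)` entry is the polynomial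
`t − R i j / 2`) is a polynomial of degree at most `1` in `t`, and the coefficient of `t`
equals `1 / det Ltil`. -/
theorem coeff_one_det_tJ_sub_half_R (n : ℕ) (hn : 2 ≤ n)
    (L : Matrix (Fin n) (Fin n) ℝ)
    (hsymm : L.IsSymm)
    (hrow : ∀ i, ∑ j, L i j = 0)
    (Ltil : Matrix (Fin (n-1)) (Fin (n-1)) ℝ)
    (hLtil : ∀ i j : Fin (n-1), Ltil i j
      = L (Fin.castLE (Nat.sub_le n 1) i) (Fin.castLE (Nat.sub_le n 1) j))
    (hinv : IsUnit Ltil)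
    (Linv : Matrix (Fin n) (Fin n) ℝ)
    (hLinv : ∀ i j : Fin n, Linv i j =
      if h : (i : ℕ) < n - 1 ∧ (j : ℕ) < n - 1
      then Ltil⁻¹ ⟨i, h.1⟩ ⟨j, h.2⟩ else 0)
    (R : Matrix (Fin n) (Fin n) ℝ)
    (hR : ∀ i j, R i j = Linv i i + Linv j j - 2 * Linv i j) :
    (Matrix.det (Matrix.of fun i j : Fin n =>
        (Polynomial.X : Polynomial ℝ) - Polynomial.C (R i j / 2))).coeff 1
      = 1 / Ltil.det :=
  coeff_one_det_tJ_sub_half_R_general n hn Ltil Linv hLinv R hR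
end

section
/- Let n ≥ 2 be even, let L be a real symmetric n×n matrix all of whose rows sum to zero such that the submatrix L̃ (obtained by deleting the last row and column) is invertible, and let R be the associated effective-resistance matrix. Let A and B be disjoint subsets of {1,…,n} with A ∪ B = {1,…,n} and |A| = |B| = n/2. Then det[L_{i,j}]_{i∈A, j∈B} = (−1)^{n/2} · det(L̃) · c₁, where the rows are indexed by the elements of A in increasing order and the columns by the elements of B in increasing order, and where c₁ is the coefficient of t in the (degree ≤ 1 in t) polynomial det[t − (1/2)R_{i,j}]_{i∈A, j∈B}. -/
/-!
Let `ν` be the last node, `G` the matrix `L̃⁻¹` padded with zeros in row and column `ν`, and `J` the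
all-ones matrix. Since `L` has zero row and column sums, `L + E_νν` has inverse `J + G` and
determinant `det L̃`. As `A` and `B` are complementary, the `A × B` minor of `L + E_νν` is that of
`L`, and Jacobi's complementary minor identity gives
`det L_{A,B} = (-1)^{n/2} · det L̃ · det (J + G)_{A,B}`.

On the other side, `det (t J + M) = det M - t · det [[M, 1], [1ᵀ, 0]]`, and this bordered
determinant does not change when a row constant and a column constant are added to `M`. Since
`-R/2 = G - (diag G) 1ᵀ/2 - 1 (diag G)ᵀ/2` and `det G_{A,B} = 0` (the node `ν` lies in `A` or in
`B`, where `G` vanishes), the coefficient of `t` is `det (J + G)_{A,B}`.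
-/

open Matrix BigOperators Polynomial

theorem Equiv.Perm.sign_sumComm (α : Type*) [Fintype α] [DecidableEq α] :
    Equiv.Perm.sign (Equiv.sumComm α α) = (-1) ^ Fintype.card α := by
  have : (Equiv.sumComm α α : Equiv.Perm (α ⊕ α)) =
      (Equiv.boolProdEquivSum α).permCongr (Equiv.prodCongrLeft fun _ => Equiv.swap false true) := by
    ext (a | a) <;> rfl
  rw [this, Equiv.Perm.sign_permCongr, Equiv.Perm.sign_prodCongrLeft]
  simp

namespace Matrix

section Jacobi

variable {α β ι R : Type*} [Fintype α] [Fintype β] [Fintype ι] [DecidableEq α] [DecidableEq β]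
  [DecidableEq ι] [CommRing R]

theorem det_mul_det_toBlocks₂₂_of_mul_eq_one {K H : Matrix (α ⊕ β) (α ⊕ β) R} (h : K * H = 1) :
    K.det * H.toBlocks₂₂.det = K.toBlocks₁₁.det := by
  rw [← fromBlocks_toBlocks K, ← fromBlocks_toBlocks H, fromBlocks_multiply, ← fromBlocks_one,
    fromBlocks_inj] at h
  have hmul : K * fromBlocks 1 H.toBlocks₁₂ 0 H.toBlocks₂₂ =
      fromBlocks K.toBlocks₁₁ 0 K.toBlocks₂₁ 1 := by
    conv_lhs => rw [← fromBlocks_toBlocks K]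
    rw [fromBlocks_multiply, h.2.1, h.2.2.2]
    simp
  simpa [det_fromBlocks_zero₁₂, det_fromBlocks_zero₂₁] using congrArg det hmul

/-- Jacobi's complementary minor identity, for two complementary index sets of equal size. -/
theorem det_submatrix_inl_inr_of_mul_eq_one {K H : Matrix ι ι R} (h : K * H = 1)
    (e : α ⊕ α ≃ ι) :
    (K.submatrix (e ∘ Sum.inl) (e ∘ Sum.inr)).det
      = (-1) ^ Fintype.card α * K.det * (H.submatrix (e ∘ Sum.inl) (e ∘ Sum.inr)).det := by
  have hswap : K.submatrix e ((Equiv.sumComm α α).trans e) *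
      H.submatrix ((Equiv.sumComm α α).trans e) e = 1 := by
    rw [submatrix_mul_equiv, h, submatrix_one_equiv]
  have hdet : (K.submatrix e ((Equiv.sumComm α α).trans e)).det =
      (-1) ^ Fintype.card α * K.det := by
    calc _ = ((K.submatrix e e).submatrix id (Equiv.sumComm α α)).det := rfl
      _ = _ := by
        rw [det_permute', Equiv.Perm.sign_sumComm, det_submatrix_equiv_self]
        push_cast
        rfl
  calc _ = _ := (det_mul_det_toBlocks₂₂_of_mul_eq_one hswap).symm
    _ = _ := by rw [hdet]; rfl

end Jacobi

section Border

variable {ι R S : Type*} [CommRing R] [CommRing S]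

/-- `-det (border M)` is the sum of all cofactors of `M`. -/
def border (M : Matrix ι ι R) : Matrix (ι ⊕ Unit) (ι ⊕ Unit) R :=
  fromBlocks M (replicateCol Unit 1) (replicateRow Unit 1) 0

theorem border_map (M : Matrix ι ι R) (f : R →+* S) : (border M).map f = border (M.map f) := by
  ext (i | i) (j | j) <;> simp [border]

variable [Fintype ι] [DecidableEq ι]

theorem det_border_add_add (M : Matrix ι ι R) (x z : ι → R) :
    (border (of fun i j => M i j + x i + z j)).det = (border M).det := by
  have : border (of fun i j => M i j + x i + z j) =
      fromBlocks 1 (replicateCol Unit x) 0 1 * border M *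
        fromBlocks 1 0 (replicateRow Unit z) 1 := by
    ext (i | i) (j | j) <;> simp [border, fromBlocks_multiply, mul_apply, one_apply]
  rw [this, det_mul, det_mul, det_fromBlocks_zero₂₁, det_fromBlocks_zero₁₂]
  simp

theorem det_const_add (M : Matrix ι ι R) (t : R) :
    (of fun i j => t + M i j).det = M.det - t * (border M).det := by
  have hschur : (of fun i j => t + M i j).det =
      (fromBlocks M (replicateCol Unit fun _ => -t) (replicateRow Unit 1) 1).det := by
    rw [det_fromBlocks_one₂₂]
    congr 1
    ext i j
    simp [mul_apply, add_comm]
  have hcol : fromBlocks M (replicateCol Unit fun _ => -t) (replicateRow Unit 1) 1 =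
      (fromBlocks M 0 (replicateRow Unit 1) 1).updateCol (Sum.inr ())
        (Sum.elim (0 : ι → R) 1 + (-t) • Sum.elim (1 : ι → R) 0) := by
    ext (i | i) (j | j) <;> simp
  have hself : (fromBlocks M 0 (replicateRow Unit 1) 1).updateCol (Sum.inr ())
      (Sum.elim (0 : ι → R) 1) = fromBlocks M 0 (replicateRow Unit 1) 1 := by
    ext (i | i) (j | j) <;> simp
  have hborder : (fromBlocks M 0 (replicateRow Unit 1) 1).updateCol (Sum.inr ())
      (Sum.elim (1 : ι → R) 0) = border M := by
    ext (i | i) (j | j) <;> simp [border]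
  rw [hschur, hcol, det_updateCol_add, det_updateCol_smul, hborder, hself, det_fromBlocks_zero₁₂]
  simp [sub_eq_add_neg]

theorem coeff_one_det_X_add_C (M : Matrix ι ι R) :
    (of fun i j => X + C (M i j)).det.coeff 1 = -(border M).det := by
  have h : (of fun i j => X + C (M i j)).det = C M.det - X * C (border M).det := by
    rw [RingHom.map_det, RingHom.map_det, RingHom.mapMatrix_apply, RingHom.mapMatrix_apply,
      border_map]
    exact det_const_add (M.map C) X
  simp [h]

theorem coeff_one_det_X_add_C_add_add (M : Matrix ι ι R) (x z : ι → R) :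
    (of fun i j => X + C (M i j + x i + z j)).det.coeff 1
      = (of fun i j => 1 + M i j).det - M.det := by
  calc _ = -(border (of fun i j => M i j + x i + z j)).det := coeff_one_det_X_add_C _
    _ = _ := by rw [det_border_add_add, det_const_add]; ring

end Border

section Grounded

variable {R : Type*} [CommRing R] {m : ℕ}

def padLast (N : Matrix (Fin m) (Fin m) R) : Matrix (Fin (m + 1)) (Fin (m + 1)) R :=
  of fun i j => Fin.lastCases 0 (fun i' => Fin.lastCases 0 (fun j' => N i' j') j) i

@[simp]
theorem padLast_castSucc (N : Matrix (Fin m) (Fin m) R) (i j : Fin m) :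
    padLast N i.castSucc j.castSucc = N i j := by
  simp [padLast]

@[simp]
theorem padLast_last_left (N : Matrix (Fin m) (Fin m) R) (j : Fin (m + 1)) :
    padLast N (Fin.last m) j = 0 := by
  simp [padLast]

@[simp]
theorem padLast_last_right (N : Matrix (Fin m) (Fin m) R) (i : Fin (m + 1)) :
    padLast N i (Fin.last m) = 0 := by
  induction i using Fin.lastCases <;> simp [padLast]

theorem det_submatrix_padLast_eq_zero {α : Type*} [Fintype α] [DecidableEq α]
    (N : Matrix (Fin m) (Fin m) R) (e : α ⊕ α ≃ Fin (m + 1)) :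
    ((padLast N).submatrix (e ∘ Sum.inl) (e ∘ Sum.inr)).det = 0 := by
  obtain ⟨i | j, hlast⟩ := e.surjective (Fin.last m)
  · exact det_eq_zero_of_row_eq_zero i fun j => by simp [hlast]
  · exact det_eq_zero_of_column_eq_zero j fun i => by simp [hlast]

theorem det_mul_apply_last_last_of_mul_eq_one {K H : Matrix (Fin (m + 1)) (Fin (m + 1)) R}
    (h : H * K = 1) :
    K.det * H (Fin.last m) (Fin.last m) = (K.submatrix Fin.castSucc Fin.castSucc).det := by
  have hadj : adjugate K = K.det • H := by
    calc adjugate K = adjugate K * (K * H) := by rw [mul_eq_one_comm.mp h, Matrix.mul_one]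
      _ = K.det • H := by rw [← Matrix.mul_assoc, adjugate_mul, smul_mul, Matrix.one_mul]
  have := adjugate_fin_succ_eq_det_submatrix K (Fin.last m) (Fin.last m)
  rw [hadj, Fin.succAbove_last, Fin.val_last, ← two_mul, pow_mul] at this
  simpa using this

variable {L : Matrix (Fin (m + 1)) (Fin (m + 1)) R} {N : Matrix (Fin m) (Fin m) R}

theorem padLast_mul_apply_castSucc (hrow : ∀ i, ∑ j, L i j = 0)
    (hN : N * L.submatrix Fin.castSucc Fin.castSucc = 1) (i : Fin m) (j : Fin (m + 1)) :
    (padLast N * L) i.castSucc j =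
      (1 : Matrix (Fin (m + 1)) (Fin (m + 1)) R) i.castSucc j - if j = Fin.last m then 1 else 0 := by
  have hNL : ∀ j', ∑ w, N i w * L w.castSucc j'.castSucc = (1 : Matrix (Fin m) (Fin m) R) i j' :=
    fun j' => by rw [← hN]; rfl
  rw [mul_apply, Fin.sum_univ_castSucc]
  induction j using Fin.lastCases with
  | last =>
    have hlast : ∀ w : Fin m, L w.castSucc (Fin.last m) = -∑ u : Fin m, L w.castSucc u.castSucc := by
      intro w
      have := hrow w.castSucc
      rw [Fin.sum_univ_castSucc] at this
      linear_combination this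
    simp only [padLast_castSucc, hlast, mul_neg, Finset.mul_sum, Finset.sum_neg_distrib]
    rw [Finset.sum_comm]
    simp [hNL, one_apply]
  | cast j => simp [hNL, one_apply]

theorem ones_add_padLast_mul_add_single_last (hrow : ∀ i, ∑ j, L i j = 0)
    (hcol : ∀ j, ∑ i, L i j = 0) (hN : N * L.submatrix Fin.castSucc Fin.castSucc = 1) :
    (of (fun _ _ => (1 : R)) + padLast N) * (L + single (Fin.last m) (Fin.last m) 1) = 1 := by
  have hJL : of (fun _ _ => (1 : R)) * L = 0 := by ext i j; simp [mul_apply, hcol]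
  have hGE : padLast N * single (Fin.last m) (Fin.last m) 1 = 0 := by
    ext i j
    by_cases hj : j = Fin.last m <;> simp [hj]
  rw [add_mul, mul_add, mul_add, hJL, hGE, zero_add, add_zero]
  ext i j
  induction i using Fin.lastCases with
  | last => by_cases hj : j = Fin.last m <;> simp [hj, mul_apply, one_apply, single_apply, eq_comm]
  | cast i =>
    rw [add_apply, padLast_mul_apply_castSucc hrow hN]
    by_cases hj : j = Fin.last m <;> simp [hj]

theorem det_submatrix_inl_inr_eq_of_sum_eq_zero {α : Type*} [Fintype α] [DecidableEq α]
    (hrow : ∀ i, ∑ j, L i j = 0) (hcol : ∀ j, ∑ i, L i j = 0)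
    (hN : N * L.submatrix Fin.castSucc Fin.castSucc = 1) (e : α ⊕ α ≃ Fin (m + 1)) :
    (L.submatrix (e ∘ Sum.inl) (e ∘ Sum.inr)).det =
      (-1) ^ Fintype.card α * (L.submatrix Fin.castSucc Fin.castSucc).det *
        ((of (fun _ _ => (1 : R)) + padLast N).submatrix (e ∘ Sum.inl) (e ∘ Sum.inr)).det := by
  set K := L + single (Fin.last m) (Fin.last m) 1
  have hHK := ones_add_padLast_mul_add_single_last hrow hcol hN
  have hminor : K.submatrix (e ∘ Sum.inl) (e ∘ Sum.inr) =
      L.submatrix (e ∘ Sum.inl) (e ∘ Sum.inr) := by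
    ext i j
    have hij : e (Sum.inl i) ≠ e (Sum.inr j) := e.injective.ne Sum.inl_ne_inr
    simp only [K, submatrix_apply, add_apply, Function.comp_apply, add_eq_left, single_apply,
      ite_eq_right_iff, and_imp]
    exact fun hi hj => absurd (hi.symm.trans hj) hij
  have hdetK : K.det = (L.submatrix Fin.castSucc Fin.castSucc).det := by
    have hsub : K.submatrix Fin.castSucc Fin.castSucc = L.submatrix Fin.castSucc Fin.castSucc := by
      ext i j
      simp [K, eq_comm (a := Fin.last m)]
    simpa [K, hsub] using det_mul_apply_last_last_of_mul_eq_one hHK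
  rw [← hminor, det_submatrix_inl_inr_of_mul_eq_one (mul_eq_one_comm.mp hHK), hdetK]

end Grounded

end Matrix

namespace Finset

variable {α : Type*} [LinearOrder α] [Fintype α] {A B : Finset α} {k l : ℕ}

noncomputable def orderIsoOfFinSumEquiv (hdisj : Disjoint A B) (hcover : A ∪ B = univ)
    (hA : #A = k) (hB : #B = l) : Fin k ⊕ Fin l ≃ α :=
  Equiv.ofBijective (Sum.elim (fun i => (A.orderIsoOfFin hA i : α)) fun j => B.orderIsoOfFin hB j)
    ⟨Function.Injective.sumElim (Subtype.val_injective.comp (A.orderIsoOfFin hA).injective)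
      (Subtype.val_injective.comp (B.orderIsoOfFin hB).injective)
      fun i j h => disjoint_left.mp hdisj (A.orderIsoOfFin hA i).2 (h ▸ (B.orderIsoOfFin hB j).2),
    fun x => by
      rcases mem_union.mp (hcover ▸ mem_univ x : x ∈ A ∪ B) with hx | hx
      · exact ⟨Sum.inl _, congrArg Subtype.val ((A.orderIsoOfFin hA).apply_symm_apply ⟨x, hx⟩)⟩
      · exact ⟨Sum.inr _, congrArg Subtype.val ((B.orderIsoOfFin hB).apply_symm_apply ⟨x, hx⟩)⟩⟩

end Finset

theorem det_L_minor_eq_sign_detLtil_mul_coeff_general (n : ℕ) (hn : 2 ≤ n)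
    (L : Matrix (Fin n) (Fin n) ℝ)
    (hsymm : L.IsSymm)
    (hrow : ∀ i, ∑ j, L i j = 0)
    (Ltil : Matrix (Fin (n-1)) (Fin (n-1)) ℝ)
    (hLtil : ∀ i j : Fin (n-1), Ltil i j
      = L (Fin.castLE (Nat.sub_le n 1) i) (Fin.castLE (Nat.sub_le n 1) j))
    (hinv : IsUnit Ltil)
    (Linv : Matrix (Fin n) (Fin n) ℝ)
    (hLinv : ∀ i j : Fin n, Linv i j =
      if h : (i : ℕ) < n - 1 ∧ (j : ℕ) < n - 1
      then Ltil⁻¹ ⟨i, h.1⟩ ⟨j, h.2⟩ else 0)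
    (R : Matrix (Fin n) (Fin n) ℝ)
    (hR : ∀ i j, R i j = Linv i i + Linv j j - 2 * Linv i j)
    (A B : Finset (Fin n))
    (hdisj : Disjoint A B)
    (hcover : A ∪ B = Finset.univ)
    (hA : A.card = n / 2) (hB : B.card = n / 2) :
    Matrix.det (Matrix.of fun i j : Fin (n / 2) =>
        L (A.orderIsoOfFin hA i) (B.orderIsoOfFin hB j))
      = (-1 : ℝ) ^ (n / 2) * Ltil.det *
        (Matrix.det (Matrix.of fun i j : Fin (n / 2) =>
          (Polynomial.X : Polynomial ℝ)
            - Polynomial.C (R (A.orderIsoOfFin hA i) (B.orderIsoOfFin hB j) / 2))).coeff 1 := by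
  obtain ⟨m, rfl⟩ : ∃ m, n = m + 1 := ⟨n - 1, by omega⟩
  obtain rfl : Ltil = L.submatrix Fin.castSucc Fin.castSucc := by ext i j; exact hLtil i j
  obtain rfl : Linv = padLast (L.submatrix Fin.castSucc Fin.castSucc)⁻¹ := by
    ext i j
    induction i using Fin.lastCases <;> induction j using Fin.lastCases <;> simp [hLinv]
  set G := padLast (L.submatrix Fin.castSucc Fin.castSucc)⁻¹
  set e := Finset.orderIsoOfFinSumEquiv hdisj hcover hA hB
  have hcol : ∀ j, ∑ i, L i j = 0 := fun j => by simpa [hsymm.apply] using hrow j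
  have hN := nonsing_inv_mul _ ((isUnit_iff_isUnit_det _).mp hinv)
  have hshift : (of fun i j => X - C (R (e (Sum.inl i)) (e (Sum.inr j)) / 2)) =
      of fun i j => X + C (G.submatrix (e ∘ Sum.inl) (e ∘ Sum.inr) i j
        + -G (e (Sum.inl i)) (e (Sum.inl i)) / 2 + -G (e (Sum.inr j)) (e (Sum.inr j)) / 2) := by
    ext i j : 1
    simp only [of_apply, submatrix_apply, Function.comp_apply, hR]
    rw [sub_eq_add_neg, ← C_neg]
    refine congrArg (fun r : ℝ => X + C r) ?_
    ring
  change (L.submatrix (e ∘ Sum.inl) (e ∘ Sum.inr)).det = _ * _ *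
    (of fun i j => X - C (R (e (Sum.inl i)) (e (Sum.inr j)) / 2)).det.coeff 1
  rw [det_submatrix_inl_inr_eq_of_sum_eq_zero hrow hcol hN e, Fintype.card_fin, hshift,
    coeff_one_det_X_add_C_add_add, det_submatrix_padLast_eq_zero, sub_zero]
  rfl

/-- Let `n ≥ 2` be even, `L`, `Ltil`, `Linv`, `R` as in the
effective-resistance setup, and let `A`, `B` be disjoint subsets of the nodes with
`A ∪ B` everything and `|A| = |B| = n/2`.  Then the minor `det [L i j]_{i∈A, j∈B}`
(rows/columns taken in increasing order) equals `(−1)^(n/2) · det Ltil · c₁`, where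
`c₁` is the coefficient of `t` in the degree-≤1 polynomial
`det [t − (1/2) R i j]_{i∈A, j∈B}`. -/
theorem det_L_minor_eq_sign_detLtil_mul_coeff (n : ℕ) (hn : 2 ≤ n) (heven : Even n)
    (L : Matrix (Fin n) (Fin n) ℝ)
    (hsymm : L.IsSymm)
    (hrow : ∀ i, ∑ j, L i j = 0)
    (Ltil : Matrix (Fin (n-1)) (Fin (n-1)) ℝ)
    (hLtil : ∀ i j : Fin (n-1), Ltil i j
      = L (Fin.castLE (Nat.sub_le n 1) i) (Fin.castLE (Nat.sub_le n 1) j))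
    (hinv : IsUnit Ltil)
    (Linv : Matrix (Fin n) (Fin n) ℝ)
    (hLinv : ∀ i j : Fin n, Linv i j =
      if h : (i : ℕ) < n - 1 ∧ (j : ℕ) < n - 1
      then Ltil⁻¹ ⟨i, h.1⟩ ⟨j, h.2⟩ else 0)
    (R : Matrix (Fin n) (Fin n) ℝ)
    (hR : ∀ i j, R i j = Linv i i + Linv j j - 2 * Linv i j)
    (A B : Finset (Fin n))
    (hdisj : Disjoint A B)
    (hcover : A ∪ B = Finset.univ)
    (hA : A.card = n / 2) (hB : B.card = n / 2) :
    Matrix.det (Matrix.of fun i j : Fin (n / 2) =>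
        L (A.orderIsoOfFin hA i) (B.orderIsoOfFin hB j))
      = (-1 : ℝ) ^ (n / 2) * Ltil.det *
        (Matrix.det (Matrix.of fun i j : Fin (n / 2) =>
          (Polynomial.X : Polynomial ℝ)
            - Polynomial.C (R (A.orderIsoOfFin hA i) (B.orderIsoOfFin hB j) / 2))).coeff 1 :=
  det_L_minor_eq_sign_detLtil_mul_coeff_general n hn L hsymm hrow Ltil hLtil hinv Linv hLinv R hR A
    B hdisj hcover hA hB
end

section
/- Let n ≥ 1 and let P be a non-crossing perfect matching of {1,…,2n}, i.e., a partition of {1,…,2n} into n two-element parts such that there are no indices a < b < c < d with {a,c} ∈ P and {b,d} ∈ P. Write the pairs of P as {a_1,b_1},…,{a_n,b_n} with a_k < b_k for each k and a_1 < a_2 < ⋯ < a_n. Then the permutation of {1,…,2n} sending (1,2,3,4,…,2n−1,2n) to (a_1,b_1,a_2,b_2,…,a_n,b_n) is even. -/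
open BigOperators

private theorem sign_eq_signAux' {m : ℕ} (f : Equiv.Perm (Fin m)) :
    Equiv.Perm.sign f = Equiv.Perm.signAux f := by
  refine Equiv.Perm.swap_induction_on f ?_ ?_
  · simp [Equiv.Perm.signAux_one]
  · intro g x y hxy ih
    rw [Equiv.Perm.signAux_mul, map_mul, ih, Equiv.Perm.signAux_swap hxy,
      Equiv.Perm.sign_swap hxy]

/-- toggle the last bit of an index in `Fin (2*n)` -/
private def tog {n : ℕ} (i : Fin (2*n)) : Fin (2*n) :=
  if h : i.val % 2 = 0 then ⟨i.val + 1, by have := i.isLt; omega⟩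
  else ⟨i.val - 1, by have := i.isLt; omega⟩

private theorem tog_val {n : ℕ} (i : Fin (2*n)) :
    (tog i).val = if i.val % 2 = 0 then i.val + 1 else i.val - 1 := by
  unfold tog; split <;> rename_i h <;> simp [h]

/-- Let `P` be a non-crossing perfect matching of `{0,…,2n−1}`, with
pairs `{a_k, b_k}` (`a_k < b_k`, `a_0 < a_1 < ⋯ < a_{n−1}`).  Encode the list
`(a_0, b_0, a_1, b_1, …, a_{n−1}, b_{n−1})` as the permutation `π` of `Fin (2n)` with
`π(2k) = a_k` and `π(2k+1) = b_k`; the hypotheses `hpair` and `hmono` say exactly that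
`π` arises this way from a perfect matching, and `hnc` says the matching is
non-crossing (there are no `a < b < c < d` with `{a,c}` and `{b,d}` both pairs).
Then `π` is even. -/
theorem noncrossing_matching_perm_even (n : ℕ) (hn : 1 ≤ n)
    (π : Equiv.Perm (Fin (2*n)))
    (hpair : ∀ k : Fin n, π ⟨2*k.val, by have := k.isLt; omega⟩
                        < π ⟨2*k.val+1, by have := k.isLt; omega⟩)
    (hmono : ∀ k l : Fin n, k < l → π ⟨2*k.val, by have := k.isLt; omega⟩
                                  < π ⟨2*l.val, by have := l.isLt; omega⟩)
    (hnc : ¬ ∃ (a b c d : Fin (2*n)), a < b ∧ b < c ∧ c < d ∧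
      (∃ k : Fin n, π ⟨2*k.val, by have := k.isLt; omega⟩ = a ∧
                    π ⟨2*k.val+1, by have := k.isLt; omega⟩ = c) ∧
      (∃ l : Fin n, π ⟨2*l.val, by have := l.isLt; omega⟩ = b ∧
                    π ⟨2*l.val+1, by have := l.isLt; omega⟩ = d)) :
    Equiv.Perm.sign π = 1 := by
  classical
  have hval : ∀ k : Fin n, 2*k.val < 2*n ∧ 2*k.val+1 < 2*n :=
    fun k => ⟨by have := k.isLt; omega, by have := k.isLt; omega⟩
  have key2 : ∀ k l : Fin n, k < l →
      (π ⟨2*l.val, (hval l).1⟩ ≤ π ⟨2*k.val+1, (hval k).2⟩ ↔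
       π ⟨2*l.val+1, (hval l).2⟩ ≤ π ⟨2*k.val+1, (hval k).2⟩) := by
    intro k l hkl
    constructor
    · intro h
      have hne : π ⟨2*l.val, (hval l).1⟩ ≠ π ⟨2*k.val+1, (hval k).2⟩ := by
        intro he
        have := congrArg Fin.val (π.injective he)
        simp only at this
        omega
      have hAlBk := lt_of_le_of_ne h hne
      by_contra hc
      push_neg at hc
      have hne2 : π ⟨2*k.val+1, (hval k).2⟩ ≠ π ⟨2*l.val+1, (hval l).2⟩ := by
        intro he
        have := congrArg Fin.val (π.injective he)
        simp only at this
        omega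
      have hBkBl := lt_of_le_of_ne (le_of_lt hc) hne2
      exact hnc ⟨_, _, _, _, hmono k l hkl, hAlBk, hBkBl, ⟨k, rfl, rfl⟩, ⟨l, rfl, rfl⟩⟩
    · intro h
      exact le_of_lt (lt_of_lt_of_le (hpair l) h)
  -- now compute the sign as a product over pairs of positions
  rw [sign_eq_signAux', Equiv.Perm.signAux]
  -- f x = 1 on same-block pairs
  have hf_same : ∀ x : Σ _ : Fin (2*n), Fin (2*n), x.2 < x.1 →
      (x.1.val = x.2.val + 1 ∧ x.2.val % 2 = 0) →
      (if π x.1 ≤ π x.2 then (-1 : ℤˣ) else 1) = 1 := by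
    intro x _ hs
    have hx2 := x.2.isLt
    have hkn : x.2.val / 2 < n := by omega
    obtain ⟨kk, hkk⟩ : ∃ kk : Fin n, kk.val = x.2.val / 2 := ⟨⟨_, hkn⟩, rfl⟩
    have h1 : x.1 = (⟨2*kk.val+1, (hval kk).2⟩ : Fin (2*n)) :=
      Fin.ext (by show x.1.val = 2*kk.val+1; rw [hkk]; omega)
    have h2 : x.2 = (⟨2*kk.val, (hval kk).1⟩ : Fin (2*n)) :=
      Fin.ext (by show x.2.val = 2*kk.val; rw [hkk]; omega)
    rw [h1, h2, if_neg (not_le.mpr (hpair kk))]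
  -- toggled pair has the same f value
  have hf_tog : ∀ x : Σ _ : Fin (2*n), Fin (2*n), x.2 < x.1 →
      ¬(x.1.val = x.2.val + 1 ∧ x.2.val % 2 = 0) →
      (if π (tog x.1) ≤ π x.2 then (-1 : ℤˣ) else 1)
        = (if π x.1 ≤ π x.2 then (-1 : ℤˣ) else 1) := by
    intro x hlt hns
    have hltv := Fin.lt_iff_val_lt_val.mp hlt
    have hx1 := x.1.isLt
    have hx2 := x.2.isLt
    have hblk : x.2.val / 2 < x.1.val / 2 := by omega
    have hkn : x.2.val / 2 < n := by omega
    have hln : x.1.val / 2 < n := by omega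
    obtain ⟨kk, hkk⟩ : ∃ kk : Fin n, kk.val = x.2.val / 2 := ⟨⟨_, hkn⟩, rfl⟩
    obtain ⟨ll, hll⟩ : ∃ ll : Fin n, ll.val = x.1.val / 2 := ⟨⟨_, hln⟩, rfl⟩
    have hkl : kk < ll := by
      rw [Fin.lt_iff_val_lt_val, hkk, hll]; exact hblk
    have htv := tog_val x.1
    -- identify π x.1 and π (tog x.1) with the pair values at block ll
    have hcase1 : (x.1 = (⟨2*ll.val, (hval ll).1⟩ : Fin (2*n))
                    ∧ tog x.1 = (⟨2*ll.val+1, (hval ll).2⟩ : Fin (2*n)))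
                ∨ (x.1 = (⟨2*ll.val+1, (hval ll).2⟩ : Fin (2*n))
                    ∧ tog x.1 = (⟨2*ll.val, (hval ll).1⟩ : Fin (2*n))) := by
      rcases Nat.even_or_odd x.1.val with he | ho
      · have he' : x.1.val % 2 = 0 := Nat.even_iff.mp he
        left
        refine ⟨Fin.ext ?_, Fin.ext ?_⟩
        · show x.1.val = 2*ll.val; rw [hll]; omega
        · show (tog x.1).val = 2*ll.val+1; rw [htv, if_pos he', hll]; omega
      · have ho' : x.1.val % 2 = 1 := Nat.odd_iff.mp ho
        have ho'' : ¬ (x.1.val % 2 = 0) := by omega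
        right
        refine ⟨Fin.ext ?_, Fin.ext ?_⟩
        · show x.1.val = 2*ll.val+1; rw [hll]; omega
        · show (tog x.1).val = 2*ll.val; rw [htv, if_neg ho'', hll]; omega
    have hcase2 : x.2 = (⟨2*kk.val, (hval kk).1⟩ : Fin (2*n))
                ∨ x.2 = (⟨2*kk.val+1, (hval kk).2⟩ : Fin (2*n)) := by
      rcases Nat.even_or_odd x.2.val with he | ho
      · have he' : x.2.val % 2 = 0 := Nat.even_iff.mp he
        left; refine Fin.ext ?_; show x.2.val = 2*kk.val; rw [hkk]; omega
      · have ho' : x.2.val % 2 = 1 := Nat.odd_iff.mp ho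
        right; refine Fin.ext ?_; show x.2.val = 2*kk.val+1; rw [hkk]; omega
    -- the comparison is the same for the two values at block ll
    have hiff : (π (⟨2*ll.val, (hval ll).1⟩ : Fin (2*n)) ≤ π x.2
              ↔ π (⟨2*ll.val+1, (hval ll).2⟩ : Fin (2*n)) ≤ π x.2) := by
      rcases hcase2 with h | h <;> rw [h]
      · constructor
        · intro hle; exact absurd (hmono kk ll hkl) (not_lt.mpr hle)
        · intro hle
          exact absurd (lt_trans (hmono kk ll hkl) (hpair ll)) (not_lt.mpr hle)
      · exact key2 kk ll hkl
    rcases hcase1 with ⟨h1, h2⟩ | ⟨h1, h2⟩ <;> rw [h2, h1]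
    · by_cases hc : π (⟨2*ll.val, (hval ll).1⟩ : Fin (2*n)) ≤ π x.2
      · rw [if_pos (hiff.mp hc), if_pos hc]
      · rw [if_neg (fun h => hc (hiff.mpr h)), if_neg hc]
    · by_cases hc : π (⟨2*ll.val+1, (hval ll).2⟩ : Fin (2*n)) ≤ π x.2
      · rw [if_pos (hiff.mpr hc), if_pos hc]
      · rw [if_neg (fun h => hc (hiff.mp h)), if_neg hc]
  -- apply the involution
  refine Finset.prod_involution
    (fun x _ => if x.1.val = x.2.val + 1 ∧ x.2.val % 2 = 0 then x else ⟨tog x.1, x.2⟩)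
    ?_ ?_ ?_ ?_
  · intro x hx
    have hlt := Equiv.Perm.mem_finPairsLT.mp hx
    beta_reduce
    by_cases hs : x.1.val = x.2.val + 1 ∧ x.2.val % 2 = 0
    · rw [if_pos hs, hf_same x hlt hs, one_mul]
    · rw [if_neg hs]
      show _ * (if π (tog x.1) ≤ π x.2 then (-1 : ℤˣ) else 1) = 1
      rw [hf_tog x hlt hs]
      exact Int.units_mul_self _
  · intro x hx hne
    have hlt := Equiv.Perm.mem_finPairsLT.mp hx
    beta_reduce
    by_cases hs : x.1.val = x.2.val + 1 ∧ x.2.val % 2 = 0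
    · exact absurd (hf_same x hlt hs) hne
    · rw [if_neg hs]
      intro he
      have : (tog x.1).val = x.1.val := congrArg (fun y => y.1.val) he
      rw [tog_val] at this
      split at this <;> omega
  · intro x hx
    have hlt := Equiv.Perm.mem_finPairsLT.mp hx
    beta_reduce
    by_cases hs : x.1.val = x.2.val + 1 ∧ x.2.val % 2 = 0
    · rw [if_pos hs]; exact hx
    · rw [if_neg hs]
      refine Equiv.Perm.mem_finPairsLT.mpr ?_
      have hltv := Fin.lt_iff_val_lt_val.mp hlt
      have hx1 := x.1.isLt
      refine Fin.lt_iff_val_lt_val.mpr ?_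
      show x.2.val < (tog x.1).val
      rw [tog_val]
      split <;> omega
  · intro x hx
    have hlt := Equiv.Perm.mem_finPairsLT.mp hx
    beta_reduce
    by_cases hs : x.1.val = x.2.val + 1 ∧ x.2.val % 2 = 0
    · simp only [if_pos hs]
    · have hltv := Fin.lt_iff_val_lt_val.mp hlt
      have hx1 := x.1.isLt
      simp only [if_neg hs]
      have hns' : ¬((tog x.1).val = x.2.val + 1 ∧ x.2.val % 2 = 0) := by
        rw [tog_val]
        split <;> omega
      simp only [if_neg hns']
      congr 1
      refine Fin.ext ?_
      rw [tog_val, tog_val]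
      split <;> split <;> omega
end

section
/- Let S be a finite set, let A, B, C, D be pairwise disjoint nonempty subsets of S, and let π₀ be a partition of S ∖ (A∪B∪C∪D). Then for every partition ρ of S: ⟨π₀∪{A∪C, B∪D}, ρ⟩ + ⟨π₀∪{A∪B, C∪D}, ρ⟩ + ⟨π₀∪{A∪D, B∪C}, ρ⟩ = ⟨π₀∪{A, B∪C∪D}, ρ⟩ + ⟨π₀∪{B, A∪C∪D}, ρ⟩ + ⟨π₀∪{C, A∪B∪D}, ρ⟩ + ⟨π₀∪{D, A∪B∪C}, ρ⟩. (Here π₀∪{X,Y} denotes the partition of S whose parts are the parts of π₀ together with X and Y.) -/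
open BigOperators
open scoped Classical

/-- `P` is a partition of the finset `T`: its parts are nonempty, pairwise disjoint,
and their union is `T`. -/
def IsPartitionOn {S : Type*} [DecidableEq S] (P : Finset (Finset S)) (T : Finset S) : Prop :=
  (∀ p ∈ P, p.Nonempty) ∧
  (∀ p ∈ P, ∀ q ∈ P, p ≠ q → Disjoint p q) ∧
  P.biUnion id = T

/-- The grove bilinear form `⟨τ,σ⟩` on partitions of a finite set `S` (represented as
finsets of parts): it is `1` if the numbers of parts of `τ` and `σ` add up to `|S| + 1`
and the transitive closure of the union of the two relations has a single equivalence
class, and `0` otherwise. -/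
noncomputable def pform {S : Type*} [Fintype S] [DecidableEq S]
    (τ σ : Finset (Finset S)) : ℝ :=
  if τ.card + σ.card = Fintype.card S + 1 ∧
      (∀ x y : S, Relation.EqvGen (fun u v =>
        (∃ p ∈ τ, u ∈ p ∧ v ∈ p) ∨ (∃ q ∈ σ, u ∈ q ∧ v ∈ q)) x y)
  then 1 else 0

/-!
Write `s₀` for the join of `π₀` and `ρ`, and `Q = A ∪ B ∪ C ∪ D`. Each of the seven partitions
is `π₀ ∪ {X, Y}` for a split `X ⊔ Y = Q`, and its pairing with `ρ` is `1` exactly when the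
number of parts is right, every class of `s₀` meets `Q`, and some class of `s₀` meets both `X`
and `Y`. Merging a block of size `k` lowers the number of classes by at most `k - 1`, so the
count of parts forces `s₀` to have at least `|Q| - 1` classes: at most one pair `{u, v}` of
distinct points of `Q` lies in a common class. A term is then `1` iff its split separates `u`
from `v`. If `u` and `v` lie in different blocks among `A, B, C, D`, exactly two splits of each
kind separate them, and otherwise none does.
-/

section BlockSetoid

variable {S : Type*}

/-- For a partition `P` the classes are the parts of `P`; the join of partitions `τ` and `σ` is
`blockSetoid τ ⊔ blockSetoid σ`. -/
def blockSetoid (P : Finset (Finset S)) : Setoid S :=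
  Relation.EqvGen.setoid fun u v => ∃ p ∈ P, u ∈ p ∧ v ∈ p

theorem blockSetoid_le_iff {P : Finset (Finset S)} {t : Setoid S} :
    blockSetoid P ≤ t ↔ ∀ p ∈ P, ∀ x ∈ p, ∀ y ∈ p, t x y :=
  ⟨fun h p hp _ hx _ hy => h (Relation.EqvGen.rel _ _ ⟨p, hp, hx, hy⟩),
    fun h => Setoid.eqvGen_le fun _ _ ⟨p, hp, hx, hy⟩ => h p hp _ hx _ hy⟩

theorem blockSetoid_rel {P : Finset (Finset S)} {p : Finset S} (hp : p ∈ P) {x y : S}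
    (hx : x ∈ p) (hy : y ∈ p) : blockSetoid P x y :=
  blockSetoid_le_iff.1 le_rfl p hp x hx y hy

theorem blockSetoid_mono {P P' : Finset (Finset S)} (h : P ⊆ P') :
    blockSetoid P ≤ blockSetoid P' :=
  blockSetoid_le_iff.2 fun _ hp _ hx _ hy => blockSetoid_rel (h hp) hx hy

theorem blockSetoid_union [DecidableEq S] (P P' : Finset (Finset S)) :
    blockSetoid (P ∪ P') = blockSetoid P ⊔ blockSetoid P' := by
  refine le_antisymm (blockSetoid_le_iff.2 fun p hp x hx y hy => ?_)
    (sup_le (blockSetoid_mono Finset.subset_union_left)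
      (blockSetoid_mono Finset.subset_union_right))
  rcases Finset.mem_union.1 hp with hp | hp
  · exact le_sup_left (a := blockSetoid P) (blockSetoid_rel hp hx hy)
  · exact le_sup_right (a := blockSetoid P) (blockSetoid_rel hp hx hy)

theorem pform_eq_ite [DecidableEq S] [Fintype S] (τ σ : Finset (Finset S)) :
    pform τ σ = if τ.card + σ.card = Fintype.card S + 1 ∧
      blockSetoid τ ⊔ blockSetoid σ = ⊤ then 1 else 0 := by
  refine if_congr (and_congr Iff.rfl ?_) rfl rfl
  rw [blockSetoid, blockSetoid, ← Setoid.gi.gc.l_sup, Setoid.eq_top_iff]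
  rfl

theorem mem_iff_mem_of_sup_blockSetoid {s : Setoid S} {P : Finset (Finset S)} {Z : Set S}
    (hs : ∀ u v, s u v → (u ∈ Z ↔ v ∈ Z)) (hP : ∀ p ∈ P, ∀ u ∈ p, ∀ v ∈ p, (u ∈ Z ↔ v ∈ Z))
    {x y : S} (h : (s ⊔ blockSetoid P) x y) : x ∈ Z ↔ y ∈ Z := by
  have hle : s ⊔ blockSetoid P ≤ Setoid.ker (· ∈ Z) :=
    sup_le (fun u v huv => propext (hs u v huv))
      (blockSetoid_le_iff.2 fun p hp u hu v hv => propext (hP p hp u hu v hv))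
  exact (Setoid.ker_def.1 (hle h)).to_iff

theorem rel_of_sup_blockSetoid_singleton {s : Setoid S} {B : Finset S} {x y : S}
    (hx : ∀ b ∈ B, ¬ s x b) (h : (s ⊔ blockSetoid {B}) x y) : s x y := by
  refine (mem_iff_mem_of_sup_blockSetoid (Z := {z | s x z}) (fun u v huv => ?_) ?_ h).1
    (Setoid.refl' s x)
  · exact ⟨fun hxu => Setoid.trans' _ hxu huv, fun hxv => Setoid.trans' _ hxv (Setoid.symm' _ huv)⟩
  · simpa using fun u hu v hv => iff_of_false (hx u hu) (hx v hv)

end BlockSetoid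

section Crossing

variable {S β : Type*}

def Linked (f : S → β) (X Y : Finset S) : Prop :=
  ∃ a ∈ X, ∃ b ∈ Y, f a = f b

def Separates (X Y : Finset S) (u v : S) : Prop :=
  u ∈ X ∧ v ∈ Y ∨ u ∈ Y ∧ v ∈ X

variable [DecidableEq S]

theorem injOn_erase_of_card_le_card_image_add_one [DecidableEq β] {f : S → β} {Q : Finset S}
    (hQ : Q.card ≤ (Q.image f).card + 1) {u v : S} (hu : u ∈ Q) (hv : v ∈ Q) (huv : u ≠ v)
    (hf : f u = f v) : Set.InjOn f (Q.erase u) := by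
  have himage : (Q.erase u).image f = Q.image f := by
    conv_rhs => rw [← Finset.insert_erase hu, Finset.image_insert, hf]
    exact (Finset.insert_eq_of_mem
      (Finset.mem_image_of_mem f (Finset.mem_erase.2 ⟨huv.symm, hv⟩))).symm
  apply Finset.injOn_of_card_image_eq
  have h1 := Finset.card_erase_add_one hu
  have h2 := Finset.card_image_le (s := Q.erase u) (f := f)
  rw [himage] at h2 ⊢
  omega

theorem linked_iff_separates {f : S → β} {Q : Finset S} {u v : S}
    (hinj : Set.InjOn f (Q.erase u)) (hv : v ∈ Q) (huv : u ≠ v) (hf : f u = f v)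
    {X Y : Finset S} (hXY : Disjoint X Y) (hXYQ : X ∪ Y ⊆ Q) :
    Linked f X Y ↔ Separates X Y u v := by
  have hQ {x : S} (hx : x ∈ X ∨ x ∈ Y) : x ∈ Q := hXYQ (Finset.mem_union.2 hx)
  have hv' : v ∈ Q.erase u := Finset.mem_erase.2 ⟨huv.symm, hv⟩
  constructor
  · rintro ⟨a, ha, b, hb, hab⟩
    have hne : a ≠ b := fun h => Finset.disjoint_left.1 hXY ha (h ▸ hb)
    by_cases hau : a = u
    · subst hau
      exact .inl ⟨ha, hinj (Finset.mem_erase.2 ⟨hne.symm, hQ (.inr hb)⟩) hv' (hab ▸ hf) ▸ hb⟩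
    by_cases hbu : b = u
    · subst hbu
      exact .inr ⟨hb, hinj (Finset.mem_erase.2 ⟨hne, hQ (.inl ha)⟩) hv' (hab.symm ▸ hf) ▸ ha⟩
    exact absurd (hinj (Finset.mem_erase.2 ⟨hau, hQ (.inl ha)⟩)
      (Finset.mem_erase.2 ⟨hbu, hQ (.inr hb)⟩) hab) hne
  · rintro (⟨hu, hv⟩ | ⟨hu, hv⟩)
    · exact ⟨u, hu, v, hv, hf⟩
    · exact ⟨v, hv, u, hu, hf.symm⟩

theorem not_linked {f : S → β} {Q : Finset S} (hinj : Set.InjOn f Q) {X Y : Finset S}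
    (hXY : Disjoint X Y) (hXYQ : X ∪ Y ⊆ Q) : ¬ Linked f X Y := fun ⟨_, ha, _, hb, hab⟩ =>
  Finset.disjoint_left.1 hXY ha
    (hinj (hXYQ (Finset.mem_union_left Y ha)) (hXYQ (Finset.mem_union_right X hb)) hab ▸ hb)

theorem separates_sum_eq {A B C D : Finset S} (hAB : Disjoint A B) (hAC : Disjoint A C)
    (hAD : Disjoint A D) (hBC : Disjoint B C) (hBD : Disjoint B D) (hCD : Disjoint C D)
    {u v : S} (hu : u ∈ A ∪ B ∪ C ∪ D) (hv : v ∈ A ∪ B ∪ C ∪ D) :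
    (if Separates (A ∪ C) (B ∪ D) u v then (1 : ℝ) else 0)
      + (if Separates (A ∪ B) (C ∪ D) u v then 1 else 0)
      + (if Separates (A ∪ D) (B ∪ C) u v then 1 else 0)
    = (if Separates A (B ∪ C ∪ D) u v then 1 else 0)
      + (if Separates B (A ∪ C ∪ D) u v then 1 else 0)
      + (if Separates C (A ∪ B ∪ D) u v then 1 else 0)
      + (if Separates D (A ∪ B ∪ C) u v then 1 else 0) := by
  simp only [Finset.mem_union] at hu hv
  rcases hu with ((hu | hu) | hu) | hu <;> rcases hv with ((hv | hv) | hv) | hv <;>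
    simp [Separates, hu, hv, Finset.disjoint_left.1 hAB, Finset.disjoint_right.1 hAB,
      Finset.disjoint_left.1 hAC, Finset.disjoint_right.1 hAC, Finset.disjoint_left.1 hAD,
      Finset.disjoint_right.1 hAD, Finset.disjoint_left.1 hBC, Finset.disjoint_right.1 hBC,
      Finset.disjoint_left.1 hBD, Finset.disjoint_right.1 hBD, Finset.disjoint_left.1 hCD,
      Finset.disjoint_right.1 hCD]

theorem linked_sum_eq [DecidableEq β] (f : S → β) {A B C D : Finset S} (hAB : Disjoint A B)
    (hAC : Disjoint A C) (hAD : Disjoint A D) (hBC : Disjoint B C) (hBD : Disjoint B D)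
    (hCD : Disjoint C D) (hQ : (A ∪ B ∪ C ∪ D).card ≤ ((A ∪ B ∪ C ∪ D).image f).card + 1) :
    (if Linked f (A ∪ C) (B ∪ D) then (1 : ℝ) else 0)
      + (if Linked f (A ∪ B) (C ∪ D) then 1 else 0)
      + (if Linked f (A ∪ D) (B ∪ C) then 1 else 0)
    = (if Linked f A (B ∪ C ∪ D) then 1 else 0)
      + (if Linked f B (A ∪ C ∪ D) then 1 else 0)
      + (if Linked f C (A ∪ B ∪ D) then 1 else 0)
      + (if Linked f D (A ∪ B ∪ C) then 1 else 0) := by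
  by_cases hcollision : ∃ u ∈ A ∪ B ∪ C ∪ D, ∃ v ∈ A ∪ B ∪ C ∪ D, u ≠ v ∧ f u = f v
  · obtain ⟨u, hu, v, hv, huv, hf⟩ := hcollision
    have hinj := injOn_erase_of_card_le_card_image_add_one hQ hu hv huv hf
    repeat rw [linked_iff_separates hinj hv huv hf]
    · exact separates_sum_eq hAB hAC hAD hBC hBD hCD hu hv
    all_goals first
      | exact Eq.subset (by ac_rfl)
      | simp [hAB, hAC, hAD, hBC, hBD, hCD, disjoint_comm]
  · have hinj : Set.InjOn f ↑(A ∪ B ∪ C ∪ D) := fun u hu v hv hf =>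
      by_contra fun huv => hcollision ⟨u, hu, v, hv, huv, hf⟩
    repeat rw [if_neg (not_linked hinj _ _)]
    · norm_num
    all_goals first
      | exact Eq.subset (by ac_rfl)
      | simp [hAB, hAC, hAD, hBC, hBD, hCD, disjoint_comm]

end Crossing

section Quotients

variable {S : Type*} [Fintype S]

theorem sup_blockSetoid_pair_eq_top_iff [DecidableEq S] {s : Setoid S} {X Y : Finset S}
    (hX : X.Nonempty) (hY : Y.Nonempty) :
    s ⊔ blockSetoid {X, Y} = ⊤ ↔
      (X ∪ Y).image (Quotient.mk s) = Finset.univ ∧ Linked (Quotient.mk s) X Y := by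
  obtain ⟨x₀, hx₀⟩ := hX
  obtain ⟨y₀, hy₀⟩ := hY
  constructor
  · intro h
    have constant (T : Finset (Quotient s))
        (hXT : ∀ u ∈ X, ∀ v ∈ X, (Quotient.mk s u ∈ T ↔ Quotient.mk s v ∈ T))
        (hYT : ∀ u ∈ Y, ∀ v ∈ Y, (Quotient.mk s u ∈ T ↔ Quotient.mk s v ∈ T)) (x y : S) :
        Quotient.mk s x ∈ T ↔ Quotient.mk s y ∈ T :=
      mem_iff_mem_of_sup_blockSetoid (Z := Quotient.mk s ⁻¹' T)
        (fun u v huv => by rw [Set.mem_preimage, Set.mem_preimage, Quotient.sound huv])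
        (by simpa using ⟨hXT, hYT⟩) (Setoid.eq_top_iff.1 h x y)
    refine ⟨Finset.eq_univ_iff_forall.2 ?_, ?_⟩
    · rintro ⟨x⟩
      have hmem {u : S} (hu : u ∈ X ∪ Y) : Quotient.mk s u ∈ (X ∪ Y).image (Quotient.mk s) :=
        Finset.mem_image_of_mem _ hu
      refine (constant _ ?_ ?_ x x₀).2 (hmem (by simp [hx₀])) <;>
        exact fun u hu v hv => iff_of_true (hmem (by simp [hu])) (hmem (by simp [hv]))
    · by_contra hsplit
      have hmem {u : S} (hu : u ∈ X) : Quotient.mk s u ∈ X.image (Quotient.mk s) :=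
        Finset.mem_image_of_mem _ hu
      have hnotMem {v : S} (hv : v ∈ Y) : Quotient.mk s v ∉ X.image (Quotient.mk s) := by
        rw [Finset.mem_image]
        exact fun ⟨a, ha, hav⟩ => hsplit ⟨a, ha, v, hv, hav⟩
      refine hnotMem hy₀ ((constant _ ?_ ?_ x₀ y₀).1 (hmem hx₀))
      · exact fun u hu v hv => iff_of_true (hmem hu) (hmem hv)
      · exact fun u hu v hv => iff_of_false (hnotMem hu) (hnotMem hv)
  · rintro ⟨hcover, a, ha, b, hb, hab⟩
    have hb_all (x : S) : (s ⊔ blockSetoid {X, Y}) x b := by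
      obtain ⟨w, hw, hwx⟩ := Finset.mem_image.1 (hcover.symm ▸ Finset.mem_univ (Quotient.mk s x))
      refine Setoid.trans' _ (le_sup_left (b := blockSetoid {X, Y}) (Quotient.exact hwx.symm)) ?_
      rcases Finset.mem_union.1 hw with hw | hw
      · exact Setoid.trans' _ (le_sup_right (a := s) (blockSetoid_rel (by simp) hw ha))
          (le_sup_left (b := blockSetoid {X, Y}) (Quotient.exact hab))
      · exact le_sup_right (a := s) (blockSetoid_rel (by simp) hw hb)
    exact Setoid.eq_top_iff.2 fun x y => Setoid.trans' _ (hb_all x) (Setoid.symm' _ (hb_all y))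

/-- The classes of `s` not meeting `B` survive in `s ⊔ blockSetoid {B}`, and the at most `|B|`
classes meeting `B` merge into one. -/
theorem card_quotient_add_one_le (s : Setoid S) {B : Finset S} (hB : B.Nonempty) :
    Nat.card (Quotient s) + 1 ≤ Nat.card (Quotient (s ⊔ blockSetoid {B})) + B.card := by
  classical
  simp only [Nat.card_eq_fintype_card]
  obtain ⟨b, hb⟩ := hB
  let g : Quotient s → Quotient (s ⊔ blockSetoid {B}) := Setoid.map_of_le le_sup_left
  set M := B.image (Quotient.mk s)
  have key : ∀ z ∉ M, ∀ z', g z = g z' → z = z' := by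
    rintro ⟨x⟩ hx ⟨y⟩ hxy
    refine Quotient.sound (rel_of_sup_blockSetoid_singleton (fun c hc hxc => hx ?_)
      (Quotient.exact hxy))
    exact Finset.mem_image.2 ⟨c, hc, Quotient.sound (Setoid.symm' _ hxc)⟩
  have hinj : Set.InjOn g ↑(insert ⟦b⟧ Mᶜ) := by
    intro z₁ hz₁ z₂ hz₂ hg
    simp only [Finset.coe_insert, Finset.coe_compl, Set.mem_insert_iff, Set.mem_compl_iff,
      Finset.mem_coe] at hz₁ hz₂
    rcases hz₁ with rfl | hz₁
    · rcases hz₂ with rfl | hz₂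
      · rfl
      · exact (key z₂ hz₂ _ hg.symm).symm
    · exact key z₁ hz₁ z₂ hg
  have h1 := Finset.card_le_card_of_injOn g (fun _ _ => Finset.mem_univ _) hinj
  have h2 : (insert ⟦b⟧ Mᶜ).card = Mᶜ.card + 1 :=
    Finset.card_insert_of_notMem (by simpa [M] using ⟨b, hb, rfl⟩)
  have h3 := Finset.card_compl_add_card M
  have h4 : M.card ≤ B.card := Finset.card_image_le
  simp only [Finset.card_univ] at h1 h3
  omega

theorem card_quotient_add_card_le [DecidableEq S] (s : Setoid S) {P : Finset (Finset S)}
    (hP : ∀ p ∈ P, p.Nonempty) :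
    Nat.card (Quotient s) + P.card ≤
      Nat.card (Quotient (s ⊔ blockSetoid P)) + ∑ p ∈ P, p.card := by
  induction P using Finset.induction_on with
  | empty => simp [sup_eq_left.2 (blockSetoid_le_iff.2 (by simp) : blockSetoid ∅ ≤ s)]
  | insert p P hp ih =>
    have h1 := card_quotient_add_one_le (s ⊔ blockSetoid P) (hP p (Finset.mem_insert_self p P))
    have h2 := ih fun q hq => hP q (Finset.mem_insert_of_mem hq)
    rw [Finset.insert_eq, blockSetoid_union, sup_comm (blockSetoid {p}), ← sup_assoc,
      ← Finset.insert_eq, Finset.card_insert_of_notMem hp, Finset.sum_insert hp]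
    omega

end Quotients

section Partitions

variable {S : Type*} [DecidableEq S]

theorem IsPartitionOn.sum_card {P : Finset (Finset S)} {T : Finset S} (h : IsPartitionOn P T) :
    ∑ p ∈ P, p.card = T.card := by
  rw [← h.2.2]
  exact (Finset.card_biUnion h.2.1).symm

variable [Fintype S]

theorem IsPartitionOn.notMem_of_subset {P : Finset (Finset S)} {Q Z : Finset S}
    (hP : IsPartitionOn P (Finset.univ \ Q)) (hZ : Z.Nonempty) (hZQ : Z ⊆ Q) : Z ∉ P := by
  intro hmem
  obtain ⟨z, hz⟩ := hZ
  have hz' : z ∈ P.biUnion id := Finset.mem_biUnion.2 ⟨Z, hmem, hz⟩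
  rw [hP.2.2, Finset.mem_sdiff] at hz'
  exact hz'.2 (hZQ hz)

theorem card_le_card_quotient_add_one {π₀ ρ : Finset (Finset S)} {Q : Finset S}
    (hπ₀ : IsPartitionOn π₀ (Finset.univ \ Q)) (hρ : IsPartitionOn ρ Finset.univ)
    (hcard : π₀.card + ρ.card + 1 = Fintype.card S) :
    Q.card ≤ Nat.card (Quotient (blockSetoid π₀ ⊔ blockSetoid ρ)) + 1 := by
  have h1 := card_quotient_add_card_le ⊥ hπ₀.1
  rw [bot_sup_eq, Nat.card_congr Setoid.quotientBotEquiv, Nat.card_eq_fintype_card,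
    hπ₀.sum_card] at h1
  have h2 := card_quotient_add_card_le (blockSetoid π₀) hρ.1
  rw [hρ.sum_card, Finset.card_univ] at h2
  have h3 := Finset.card_sdiff_add_card_eq_card (Finset.subset_univ Q)
  rw [Finset.card_univ] at h3
  omega

theorem pform_union_pair_eq_ite {π₀ ρ : Finset (Finset S)} {Q X Y : Finset S}
    (hπ₀ : IsPartitionOn π₀ (Finset.univ \ Q)) (hX : X.Nonempty) (hY : Y.Nonempty)
    (hXY : Disjoint X Y) (hXYQ : X ∪ Y = Q) :
    pform (π₀ ∪ {X, Y}) ρ =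
      if (π₀.card + ρ.card + 1 = Fintype.card S ∧
          Q.image (Quotient.mk (blockSetoid π₀ ⊔ blockSetoid ρ)) = Finset.univ) ∧
        Linked (Quotient.mk (blockSetoid π₀ ⊔ blockSetoid ρ)) X Y then 1 else 0 := by
  have hXπ₀ := hπ₀.notMem_of_subset hX (hXYQ ▸ Finset.subset_union_left)
  have hYπ₀ := hπ₀.notMem_of_subset hY (hXYQ ▸ Finset.subset_union_right)
  have hne : X ≠ Y := by
    rintro rfl
    exact hX.ne_empty ((Finset.disjoint_self_iff_empty X).1 hXY)
  have hcard : (π₀ ∪ {X, Y}).card = π₀.card + 2 := by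
    rw [Finset.card_union_of_disjoint (by simp [hXπ₀, hYπ₀]), Finset.card_pair hne]
  rw [pform_eq_ite, hcard]
  refine if_congr ?_ rfl rfl
  rw [blockSetoid_union, sup_right_comm, sup_blockSetoid_pair_eq_top_iff hX hY, hXYQ, and_assoc]
  exact and_congr ⟨fun h => by omega, fun h => by omega⟩ Iff.rfl

end Partitions

/-- Let `S` be a finite set, `A`, `B`, `C`, `D` pairwise disjoint
nonempty subsets of `S`, and `π₀` a partition of `S ∖ (A∪B∪C∪D)`.  Then for every
partition `ρ` of `S`:
`⟨π₀∪{A∪C, B∪D}, ρ⟩ + ⟨π₀∪{A∪B, C∪D}, ρ⟩ + ⟨π₀∪{A∪D, B∪C}, ρ⟩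
  = ⟨π₀∪{A, B∪C∪D}, ρ⟩ + ⟨π₀∪{B, A∪C∪D}, ρ⟩ + ⟨π₀∪{C, A∪B∪D}, ρ⟩ + ⟨π₀∪{D, A∪B∪C}, ρ⟩`. -/
theorem generalized_crossing_identity {S : Type*} [Fintype S] [DecidableEq S]
    (A B C D : Finset S)
    (hA : A.Nonempty) (hB : B.Nonempty) (hC : C.Nonempty) (hD : D.Nonempty)
    (hAB : Disjoint A B) (hAC : Disjoint A C) (hAD : Disjoint A D)
    (hBC : Disjoint B C) (hBD : Disjoint B D) (hCD : Disjoint C D)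
    (π₀ : Finset (Finset S))
    (hπ₀ : IsPartitionOn π₀ (Finset.univ \ (A ∪ B ∪ C ∪ D)))
    (ρ : Finset (Finset S)) (hρ : IsPartitionOn ρ Finset.univ) :
    pform (π₀ ∪ {A ∪ C, B ∪ D}) ρ
      + pform (π₀ ∪ {A ∪ B, C ∪ D}) ρ
      + pform (π₀ ∪ {A ∪ D, B ∪ C}) ρ
    = pform (π₀ ∪ {A, B ∪ C ∪ D}) ρ
      + pform (π₀ ∪ {B, A ∪ C ∪ D}) ρ
      + pform (π₀ ∪ {C, A ∪ B ∪ D}) ρ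
      + pform (π₀ ∪ {D, A ∪ B ∪ C}) ρ := by
  repeat rw [pform_union_pair_eq_ite hπ₀]
  · by_cases hc : π₀.card + ρ.card + 1 = Fintype.card S ∧
        (A ∪ B ∪ C ∪ D).image (Quotient.mk (blockSetoid π₀ ⊔ blockSetoid ρ)) = Finset.univ
    · have hQ : (A ∪ B ∪ C ∪ D).card ≤
          ((A ∪ B ∪ C ∪ D).image (Quotient.mk (blockSetoid π₀ ⊔ blockSetoid ρ))).card + 1 := by
        rw [hc.2, Finset.card_univ, ← Nat.card_eq_fintype_card]
        exact card_le_card_quotient_add_one hπ₀ hρ hc.1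
      simp only [hc, true_and]
      exact linked_sum_eq _ hAB hAC hAD hBC hBD hCD hQ
    · simp only [hc, false_and, if_false, add_zero]
  all_goals first
    | ac_rfl
    | simp [hA, hB, hC, hD, hAB, hAC, hAD, hBC, hBD, hCD, disjoint_comm]
end

section
/- Let n ≥ 2, let τ be a partition of {1,…,n−1}, and let (α_σ) be real coefficients indexed by the partitions σ of {1,…,n−1} such that for every partition ρ of {1,…,n−1} one has ⟨τ,ρ⟩ = Σ_σ α_σ ⟨σ,ρ⟩. For a partition π of {1,…,n−1}, let π|n denote the partition of {1,…,n} obtained by adjoining {n} as a new singleton part. Then for every partition ρ′ of {1,…,n}: ⟨τ|n, ρ′⟩ = Σ_σ α_σ ⟨σ|n, ρ′⟩. -/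
open BigOperators
open scoped Classical

/-- `π|n`: the partition of `{1,…,m+1}` (as `Fin (m+1)`) obtained from a partition of
`{1,…,m}` (as `Fin m`) by adjoining the new top element as a singleton part. -/
def adjoinSingleton {m : ℕ} (τ : Finset (Finset (Fin m))) : Finset (Finset (Fin (m+1))) :=
  insert {Fin.last m} (τ.image (fun p => p.image Fin.castSucc))

private lemma eqvGen_map' {A B : Type*} {r : A → A → Prop} {s : B → B → Prop}
    {f : A → B} (h : ∀ x y, r x y → Relation.EqvGen s (f x) (f y)) :
    ∀ x y, Relation.EqvGen r x y → Relation.EqvGen s (f x) (f y) := by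
  intro x y hxy
  induction hxy with
  | rel a b hab => exact h a b hab
  | refl a => exact Relation.EqvGen.refl _
  | symm a b _ ih => exact Relation.EqvGen.symm _ _ ih
  | trans a b c _ _ ih1 ih2 => exact Relation.EqvGen.trans _ _ _ ih1 ih2

/-- In the degenerate case where every part of `ρ'` containing the last element is the
singleton `{last}`, the form with any adjoined partition vanishes. -/
private lemma pform_adjoin_zero {m : ℕ} (hm : 1 ≤ m) (σ : Finset (Finset (Fin m)))
    (ρ' : Finset (Finset (Fin (m+1))))
    (hq : ∀ q ∈ ρ', Fin.last m ∈ q → q = {Fin.last m}) :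
    pform (adjoinSingleton σ) ρ' = 0 := by
  rw [pform, if_neg]
  rintro ⟨-, hconn⟩
  set L := Fin.last m with hL
  have step : ∀ u v : Fin (m+1),
      ((∃ p ∈ adjoinSingleton σ, u ∈ p ∧ v ∈ p) ∨ (∃ q ∈ ρ', u ∈ q ∧ v ∈ q)) →
      (u = L ↔ v = L) := by
    rintro u v (⟨p, hp, hu, hv⟩ | ⟨q, hq', hu, hv⟩)
    · rcases Finset.mem_insert.mp hp with h | h
      · subst h
        simp only [Finset.mem_singleton] at hu hv
        simp [hu, hv]
      · obtain ⟨t, -, rfl⟩ := Finset.mem_image.mp h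
        have hnot : L ∉ t.image Fin.castSucc := by
          simp only [Finset.mem_image]
          rintro ⟨a, -, ha⟩
          exact (Fin.castSucc_lt_last a).ne ha
        exact iff_of_false (fun h => hnot (h ▸ hu)) (fun h => hnot (h ▸ hv))
    · by_cases hLq : L ∈ q
      · have := hq q hq' hLq
        subst this
        simp only [Finset.mem_singleton] at hu hv
        simp [hu, hv]
      · exact iff_of_false (fun h => hLq (h ▸ hu)) (fun h => hLq (h ▸ hv))
  have key : ∀ u v : Fin (m+1),
      Relation.EqvGen (fun u v =>
        (∃ p ∈ adjoinSingleton σ, u ∈ p ∧ v ∈ p) ∨ (∃ q ∈ ρ', u ∈ q ∧ v ∈ q)) u v →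
      (u = L ↔ v = L) := by
    intro u v h
    induction h with
    | rel a b hab => exact step a b hab
    | refl a => exact Iff.rfl
    | symm a b _ ih => exact ih.symm
    | trans a b c _ _ ih1 ih2 => exact ih1.trans ih2
  have h0 := (key (Fin.castSucc ⟨0, hm⟩) L (hconn _ _)).mpr rfl
  exact (Fin.castSucc_lt_last _).ne h0

private lemma pform_congr {S S' : Type*} [Fintype S] [DecidableEq S]
    [Fintype S'] [DecidableEq S']
    {τ σ : Finset (Finset S)} {τ' σ' : Finset (Finset S')}
    (h : (τ.card + σ.card = Fintype.card S + 1 ∧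
      (∀ x y : S, Relation.EqvGen (fun u v =>
        (∃ p ∈ τ, u ∈ p ∧ v ∈ p) ∨ (∃ q ∈ σ, u ∈ q ∧ v ∈ q)) x y)) ↔
      (τ'.card + σ'.card = Fintype.card S' + 1 ∧
      (∀ x y : S', Relation.EqvGen (fun u v =>
        (∃ p ∈ τ', u ∈ p ∧ v ∈ p) ∨ (∃ q ∈ σ', u ∈ q ∧ v ∈ q)) x y))) :
    pform τ σ = pform τ' σ' := by
  rw [pform, pform]
  by_cases hc : τ.card + σ.card = Fintype.card S + 1 ∧
      (∀ x y : S, Relation.EqvGen (fun u v =>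
        (∃ p ∈ τ, u ∈ p ∧ v ∈ p) ∨ (∃ q ∈ σ, u ∈ q ∧ v ∈ q)) x y)
  · rw [if_pos hc, if_pos (h.mp hc)]
  · rw [if_neg hc, if_neg (fun hc' => hc (h.mpr hc'))]

/-- Restriction of a partition of `Fin (m+1)` to `Fin m` by pulling back along
`castSucc` (i.e. removing the last element from its part). -/
noncomputable def restrictDown {m : ℕ} (ρ' : Finset (Finset (Fin (m+1)))) :
    Finset (Finset (Fin m)) :=
  ρ'.image (fun p => p.preimage Fin.castSucc (Fin.castSucc_injective m).injOn)

section Main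

variable {m : ℕ} (ρ' : Finset (Finset (Fin (m+1))))

private lemma restrict_partition (hρ' : IsPartitionOn ρ' Finset.univ)
    (h : ∀ q ∈ ρ', ∃ x : Fin m, Fin.castSucc x ∈ q) :
    IsPartitionOn (restrictDown ρ') Finset.univ := by
  obtain ⟨-, hdisj, hun⟩ := hρ'
  refine ⟨?_, ?_, ?_⟩
  · intro p hp
    obtain ⟨q, hq, rfl⟩ := Finset.mem_image.mp hp
    obtain ⟨x, hx⟩ := h q hq
    exact ⟨x, Finset.mem_preimage.mpr hx⟩
  · intro p hp q hq hne
    obtain ⟨p', hp', rfl⟩ := Finset.mem_image.mp hp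
    obtain ⟨q', hq', rfl⟩ := Finset.mem_image.mp hq
    have hne' : p' ≠ q' := fun h => hne (by rw [h])
    have hd := hdisj p' hp' q' hq' hne'
    rw [Finset.disjoint_left] at hd ⊢
    intro x hx hx'
    exact hd (Finset.mem_preimage.mp hx) (Finset.mem_preimage.mp hx')
  · apply Finset.eq_univ_of_forall
    intro x
    have : Fin.castSucc x ∈ ρ'.biUnion id := by rw [hun]; exact Finset.mem_univ _
    obtain ⟨q, hq, hxq⟩ := Finset.mem_biUnion.mp this
    exact Finset.mem_biUnion.mpr ⟨_, Finset.mem_image_of_mem _ hq,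
      Finset.mem_preimage.mpr hxq⟩

private lemma restrict_card (hρ' : IsPartitionOn ρ' Finset.univ)
    (h : ∀ q ∈ ρ', ∃ x : Fin m, Fin.castSucc x ∈ q) :
    (restrictDown ρ').card = ρ'.card := by
  obtain ⟨-, hdisj, -⟩ := hρ'
  apply Finset.card_image_of_injOn
  intro p hp q hq hpq
  by_contra hne
  obtain ⟨x, hx⟩ := h p hp
  have hx1 : x ∈ p.preimage Fin.castSucc (Fin.castSucc_injective m).injOn :=
    Finset.mem_preimage.mpr hx
  have hpq' : p.preimage Fin.castSucc (Fin.castSucc_injective m).injOn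
      = q.preimage Fin.castSucc (Fin.castSucc_injective m).injOn := hpq
  have hx2 : x ∈ q.preimage Fin.castSucc (Fin.castSucc_injective m).injOn := hpq' ▸ hx1
  exact (Finset.disjoint_left.mp (hdisj p hp q hq hne)) hx (Finset.mem_preimage.mp hx2)

private lemma adjoin_card (σ : Finset (Finset (Fin m))) (hσ : ∀ p ∈ σ, p.Nonempty) :
    (adjoinSingleton σ).card = σ.card + 1 := by
  rw [adjoinSingleton, Finset.card_insert_of_notMem, Finset.card_image_of_injective _
    (Finset.image_injective (Fin.castSucc_injective m))]
  simp only [Finset.mem_image]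
  rintro ⟨p, hp, hip⟩
  obtain ⟨x, hx⟩ := hσ p hp
  have : Fin.castSucc x ∈ ({Fin.last m} : Finset (Fin (m+1))) :=
    hip ▸ Finset.mem_image_of_mem _ hx
  exact (Fin.castSucc_lt_last x).ne (Finset.mem_singleton.mp this)

/-- The main computation: if the part of `ρ'` containing the last element also contains
another element, then `⟨σ|n, ρ'⟩ = ⟨σ, ρ⟩` where `ρ` restricts `ρ'` down. -/
private lemma pform_adjoin_eq (hρ' : IsPartitionOn ρ' Finset.univ)
    (B : Finset (Fin (m+1))) (hB : B ∈ ρ') (hlastB : Fin.last m ∈ B)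
    (c : Fin m) (hc : Fin.castSucc c ∈ B)
    (h : ∀ q ∈ ρ', ∃ x : Fin m, Fin.castSucc x ∈ q)
    (σ : Finset (Finset (Fin m))) (hσ : IsPartitionOn σ Finset.univ) :
    pform (adjoinSingleton σ) ρ' = pform σ (restrictDown ρ') := by
  obtain ⟨hσne, -, -⟩ := hσ
  have hdisj := hρ'.2.1
  set ρ := restrictDown ρ' with hρdef
  set f : Fin m → Fin (m+1) := Fin.castSucc with hf
  -- card condition
  have hcard : (adjoinSingleton σ).card + ρ'.card = Fintype.card (Fin (m+1)) + 1 ↔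
      σ.card + ρ.card = Fintype.card (Fin m) + 1 := by
    rw [adjoin_card σ hσne, restrict_card ρ' hρ' h, Fintype.card_fin, Fintype.card_fin]
    omega
  -- connectivity condition
  set R' : Fin (m+1) → Fin (m+1) → Prop := fun u v =>
    (∃ p ∈ adjoinSingleton σ, u ∈ p ∧ v ∈ p) ∨ (∃ q ∈ ρ', u ∈ q ∧ v ∈ q) with hR'
  set R : Fin m → Fin m → Prop := fun u v =>
    (∃ p ∈ σ, u ∈ p ∧ v ∈ p) ∨ (∃ q ∈ ρ, u ∈ q ∧ v ∈ q) with hR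
  have hconn : (∀ x y, Relation.EqvGen R' x y) ↔ (∀ x y, Relation.EqvGen R x y) := by
    constructor
    · -- down direction
      intro hR'all
      set g : Fin (m+1) → Fin m := fun u =>
        if h : u = Fin.last m then c else u.castPred h with hg
      have gf : ∀ a : Fin m, g (f a) = a := by
        intro a
        rw [hg]
        simp only
        rw [dif_neg (Fin.castSucc_lt_last a).ne]
        exact Fin.castPred_castSucc _
      have step : ∀ u v, R' u v → Relation.EqvGen R (g u) (g v) := by
        rintro u v (⟨p, hp, hu, hv⟩ | ⟨q, hq, hu, hv⟩)
        · rcases Finset.mem_insert.mp hp with hps | hpi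
          · subst hps
            simp only [Finset.mem_singleton] at hu hv
            rw [hu, hv]
            exact Relation.EqvGen.refl _
          · obtain ⟨t, ht, rfl⟩ := Finset.mem_image.mp hpi
            obtain ⟨a, ha, rfl⟩ := Finset.mem_image.mp hu
            obtain ⟨b, hb, rfl⟩ := Finset.mem_image.mp hv
            rw [gf, gf]
            exact Relation.EqvGen.rel _ _ (Or.inl ⟨t, ht, ha, hb⟩)
        · -- both in a part of ρ'
          have key : ∀ w ∈ q, g w ∈ q.preimage f (Fin.castSucc_injective m).injOn := by
            intro w hw
            by_cases hwl : w = Fin.last m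
            · subst hwl
              have hqB : q = B := by
                by_contra hne
                exact (Finset.disjoint_left.mp (hdisj q hq B hB hne)) hw hlastB
              subst hqB
              have : g (Fin.last m) = c := by rw [hg]; simp
              rw [this]
              exact Finset.mem_preimage.mpr hc
            · have hgw : f (g w) = w := by
                rw [hg]
                simp only
                rw [dif_neg hwl]
                exact Fin.castSucc_castPred w hwl
              exact Finset.mem_preimage.mpr (by rw [hgw]; exact hw)
          exact Relation.EqvGen.rel _ _ (Or.inr ⟨_,
            Finset.mem_image_of_mem _ hq, key u hu, key v hv⟩)
      intro x y
      have := eqvGen_map' step (f x) (f y) (hR'all (f x) (f y))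
      rwa [gf, gf] at this
    · -- up direction
      intro hRall
      have lift : ∀ a b, R a b → R' (f a) (f b) := by
        rintro a b (⟨p, hp, ha, hb⟩ | ⟨q, hq, ha, hb⟩)
        · exact Or.inl ⟨p.image f, Finset.mem_insert_of_mem (Finset.mem_image_of_mem _ hp),
            Finset.mem_image_of_mem _ ha, Finset.mem_image_of_mem _ hb⟩
        · obtain ⟨q', hq', rfl⟩ := Finset.mem_image.mp hq
          exact Or.inr ⟨q', hq', Finset.mem_preimage.mp ha, Finset.mem_preimage.mp hb⟩
      have lift' : ∀ a b : Fin m, Relation.EqvGen R' (f a) (f b) := fun a b =>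
        eqvGen_map' (fun x y hxy => Relation.EqvGen.rel _ _ (lift x y hxy)) a b (hRall a b)
      have key : ∀ u : Fin (m+1), Relation.EqvGen R' u (f c) := by
        intro u
        by_cases hu : u = Fin.last m
        · subst hu
          exact Relation.EqvGen.rel _ _ (Or.inr ⟨B, hB, hlastB, hc⟩)
        · have : u = f (u.castPred hu) := (Fin.castSucc_castPred u hu).symm
          rw [this]
          exact lift' _ _
      intro x y
      exact Relation.EqvGen.trans _ _ _ (key x) (Relation.EqvGen.symm _ _ (key y))
  rw [hR', hR] at hconn
  exact pform_congr (and_congr hcard hconn)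

end Main

/-- (With `n = m + 1 ≥ 2`.)  Let `τ` be a partition of `{1,…,m}` and
`(α_σ)` real coefficients indexed by the partitions `σ` of `{1,…,m}` such that
`⟨τ,ρ⟩ = Σ_σ α_σ ⟨σ,ρ⟩` for every partition `ρ` of `{1,…,m}`.  Then for every partition
`ρ'` of `{1,…,m+1}`: `⟨τ|n, ρ'⟩ = Σ_σ α_σ ⟨σ|n, ρ'⟩`, where `π|n` adjoins the new
element as a singleton part. -/
theorem equivalence_extends_by_singleton (m : ℕ) (hm : 1 ≤ m)
    (τ : Finset (Finset (Fin m))) (hτ : IsPartitionOn τ Finset.univ)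
    (α : Finset (Finset (Fin m)) → ℝ)
    (hα : ∀ ρ : Finset (Finset (Fin m)), IsPartitionOn ρ Finset.univ →
      pform τ ρ = ∑ σ ∈ Finset.univ.filter
        (fun σ : Finset (Finset (Fin m)) => IsPartitionOn σ Finset.univ),
        α σ * pform σ ρ)
    (ρ' : Finset (Finset (Fin (m+1)))) (hρ' : IsPartitionOn ρ' Finset.univ) :
    pform (adjoinSingleton τ) ρ' = ∑ σ ∈ Finset.univ.filter
        (fun σ : Finset (Finset (Fin m)) => IsPartitionOn σ Finset.univ),
        α σ * pform (adjoinSingleton σ) ρ' := by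
  classical
  obtain ⟨hρne, hρdisj, hρun⟩ := hρ'
  have hρ'p : IsPartitionOn ρ' Finset.univ := ⟨hρne, hρdisj, hρun⟩
  have hlast : Fin.last m ∈ ρ'.biUnion id := by rw [hρun]; exact Finset.mem_univ _
  obtain ⟨B, hB, hlastB⟩ := Finset.mem_biUnion.mp hlast
  by_cases hsing : ∀ b ∈ B, b = Fin.last m
  · -- the part containing the last element is the singleton {last}: everything vanishes
    have hBsing : B = {Fin.last m} := by
      apply Finset.eq_singleton_iff_unique_mem.mpr
      exact ⟨hlastB, hsing⟩
    have hq : ∀ q ∈ ρ', Fin.last m ∈ q → q = {Fin.last m} := by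
      intro q hq hLq
      by_contra hne
      have hne' : q ≠ B := fun h => hne (h ▸ hBsing)
      exact (Finset.disjoint_left.mp (hρdisj q hq B hB hne')) hLq hlastB
    rw [pform_adjoin_zero hm τ ρ' hq]
    symm
    apply Finset.sum_eq_zero
    intro σ hσ
    rw [pform_adjoin_zero hm σ ρ' hq, mul_zero]
  · push_neg at hsing
    obtain ⟨b0, hb0B, hb0ne⟩ := hsing
    obtain ⟨c, hc⟩ : ∃ c : Fin m, Fin.castSucc c ∈ B :=
      ⟨b0.castPred hb0ne, by rw [Fin.castSucc_castPred]; exact hb0B⟩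
    have h : ∀ q ∈ ρ', ∃ x : Fin m, Fin.castSucc x ∈ q := by
      intro q hq
      by_cases hLq : Fin.last m ∈ q
      · have hqB : q = B := by
          by_contra hne
          exact (Finset.disjoint_left.mp (hρdisj q hq B hB hne)) hLq hlastB
        exact ⟨c, by rw [hqB]; exact hc⟩
      · obtain ⟨x, hx⟩ := hρne q hq
        have hxne : x ≠ Fin.last m := fun hh => hLq (hh ▸ hx)
        exact ⟨x.castPred hxne, by rw [Fin.castSucc_castPred]; exact hx⟩
    have hρp := restrict_partition ρ' hρ'p h
    rw [pform_adjoin_eq ρ' hρ'p B hB hlastB c hc h τ hτ, hα _ hρp]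
    apply Finset.sum_congr rfl
    intro σ hσ
    rw [pform_adjoin_eq ρ' hρ'p B hB hlastB c hc h σ
      ((Finset.mem_filter.mp hσ).2)]
end

section
/- Let n ≥ 2, let τ be a partition of {1,…,n−1}, let 1 ≤ j < n, and let (α_σ) be real coefficients indexed by the partitions σ of {1,…,n−1} such that for every partition ρ of {1,…,n−1} one has ⟨τ,ρ⟩ = Σ_σ α_σ ⟨σ,ρ⟩. For a partition π of {1,…,n−1}, let π↑j denote the partition of {1,…,n} obtained by inserting the element n into the part of π that contains j. Then for every partition ρ′ of {1,…,n}: ⟨τ↑j, ρ′⟩ = Σ_σ α_σ ⟨σ↑j, ρ′⟩. -/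
open BigOperators
open scoped Classical

/-- `π↑j`: the partition of `{1,…,m+1}` (as `Fin (m+1)`) obtained from a partition of
`{1,…,m}` (as `Fin m`) by inserting the new top element into the part containing `j`. -/
def insertIntoPart {m : ℕ} (j : Fin m) (τ : Finset (Finset (Fin m))) :
    Finset (Finset (Fin (m+1))) :=
  τ.image (fun p => if j ∈ p then insert (Fin.last m) (p.image Fin.castSucc)
                    else p.image Fin.castSucc)

section helpers
variable {S : Type*} [Fintype S] [DecidableEq S]

lemma part_exists {P : Finset (Finset S)} (hP : IsPartitionOn P Finset.univ) (x : S) :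
    ∃ p ∈ P, x ∈ p := by
  have := hP.2.2
  have hx : x ∈ P.biUnion id := by rw [this]; exact Finset.mem_univ x
  simpa using hx

lemma part_unique {P : Finset (Finset S)} (hP : IsPartitionOn P Finset.univ)
    {p q : Finset S} (hp : p ∈ P) (hq : q ∈ P) {x : S} (hxp : x ∈ p) (hxq : x ∈ q) : p = q := by
  by_contra h
  exact (Finset.disjoint_left.mp (hP.2.1 p hp q hq h)) hxp hxq

lemma sum_card_parts {P : Finset (Finset S)} (hP : IsPartitionOn P Finset.univ) :
    ∑ p ∈ P, p.card = Fintype.card S := by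
  have h := Finset.card_biUnion (s := P) (t := id) (fun p hp q hq h => hP.2.1 p hp q hq h)
  rw [hP.2.2, Finset.card_univ] at h
  simpa using h.symm

noncomputable def prep (x0 : S) (p : Finset S) : S :=
  if h : p.Nonempty then h.choose else x0

lemma prep_mem (x0 : S) {p : Finset S} (h : p.Nonempty) : prep x0 p ∈ p := by
  rw [prep, dif_pos h]; exact h.choose_spec

noncomputable def evec (x : S) : S → ℝ := Pi.single x 1

noncomputable def pvecs (x0 : S) (P : Finset (Finset S)) : Finset (S → ℝ) :=
  P.biUnion (fun p => (p.erase (prep x0 p)).image (fun x => evec x - evec (prep x0 p)))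

lemma pvecs_card {x0 : S} {P : Finset (Finset S)} (hP : IsPartitionOn P Finset.univ) :
    (pvecs x0 P).card + P.card ≤ Fintype.card S := by
  have h1 : (pvecs x0 P).card ≤ ∑ p ∈ P, (p.card - 1) := by
    refine (Finset.card_biUnion_le).trans (Finset.sum_le_sum fun p hp => ?_)
    refine (Finset.card_image_le).trans ?_
    rw [Finset.card_erase_of_mem (prep_mem x0 (hP.1 p hp))]
  have h2 : ∑ p ∈ P, (p.card - 1) + P.card = Fintype.card S := by
    have he : ∑ p ∈ P, ((p.card - 1) + 1) = ∑ p ∈ P, p.card :=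
      Finset.sum_congr rfl fun p hp => Nat.sub_add_cancel (Finset.card_pos.mpr (hP.1 p hp))
    rw [← sum_card_parts hP, ← he, Finset.sum_add_distrib, Finset.sum_const, smul_eq_mul, mul_one]
  omega

lemma diff_mem_span {x0 : S} {P : Finset (Finset S)} {p : Finset S} (hp : p ∈ P)
    {u v : S} (hu : u ∈ p) (hv : v ∈ p) :
    evec u - evec v ∈ Submodule.span ℝ ((pvecs x0 P : Set (S → ℝ))) := by
  have key : ∀ x ∈ p, evec x - evec (prep x0 p) ∈ Submodule.span ℝ ((pvecs x0 P : Set (S → ℝ))) := by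
    intro x hx
    by_cases hxr : x = prep x0 p
    · rw [hxr, sub_self]; exact Submodule.zero_mem _
    · apply Submodule.subset_span
      simp only [pvecs, Finset.coe_biUnion, Set.mem_iUnion, Finset.mem_coe]
      exact ⟨p, hp, Finset.mem_image.mpr ⟨x, Finset.mem_erase.mpr ⟨hxr, hx⟩, rfl⟩⟩
  have := sub_mem (key u hu) (key v hv)
  simpa using this

lemma forest_bound (x0 : S) {π ρ : Finset (Finset S)}
    (hπ : IsPartitionOn π Finset.univ) (hρ : IsPartitionOn ρ Finset.univ)
    (hconn : ∀ x y : S, Relation.EqvGen (fun u v =>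
        (∃ p ∈ π, u ∈ p ∧ v ∈ p) ∨ (∃ q ∈ ρ, u ∈ q ∧ v ∈ q)) x y) :
    π.card + ρ.card ≤ Fintype.card S + 1 := by
  set W : Submodule ℝ (S → ℝ) :=
    Submodule.span ℝ (((pvecs x0 π ∪ pvecs x0 ρ) : Finset (S → ℝ)) : Set (S → ℝ)) with hW
  have hsub1 : Submodule.span ℝ ((pvecs x0 π : Set (S → ℝ))) ≤ W :=
    Submodule.span_mono (by simp [Finset.coe_union])
  have hsub2 : Submodule.span ℝ ((pvecs x0 ρ : Set (S → ℝ))) ≤ W :=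
    Submodule.span_mono (by simp [Finset.coe_union])
  have hdiff : ∀ u v : S, evec u - evec v ∈ W := by
    intro u v
    induction hconn u v with
    | rel u v h =>
      rcases h with ⟨p, hp, hu, hv⟩ | ⟨q, hq, hu, hv⟩
      · exact hsub1 (diff_mem_span hp hu hv)
      · exact hsub2 (diff_mem_span hq hu hv)
    | refl u => rw [sub_self]; exact Submodule.zero_mem _
    | symm u v _ ih => have := neg_mem ih; simpa using this
    | trans u w v _ _ ih1 ih2 => have := add_mem ih1 ih2; simpa using this
  -- linear independent family
  set w : {i : S // i ≠ x0} → (S → ℝ) := fun i => evec i.1 - evec x0 with hw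
  have hli : LinearIndependent ℝ w := by
    rw [Fintype.linearIndependent_iff]
    intro g hg i0
    have := congrFun hg i0.1
    rw [Finset.sum_apply] at this
    have heval : ∀ i : {i : S // i ≠ x0},
        (g i • w i) i0.1 = if i = i0 then g i else 0 := by
      intro i
      simp only [hw, Pi.smul_apply, Pi.sub_apply, evec, smul_eq_mul, Pi.single_apply,
        if_neg i0.2, sub_zero]
      by_cases h : i = i0
      · subst h; simp
      · rw [if_neg h, if_neg (fun hc => h (Subtype.ext hc.symm)), mul_zero]
    rw [Finset.sum_congr rfl (fun i _ => heval i),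
      Finset.sum_ite_eq' Finset.univ i0 (fun i => g i)] at this
    simpa using this
  have hrange : Set.range w ⊆ (W : Set (S → ℝ)) := by
    rintro _ ⟨i, rfl⟩; exact hdiff i.1 x0
  have hle : Submodule.span ℝ (Set.range w) ≤ W := Submodule.span_le.mpr hrange
  have hfr1 : Module.finrank ℝ (Submodule.span ℝ (Set.range w)) = Fintype.card S - 1 := by
    rw [finrank_span_eq_card hli]
    rw [Fintype.card_subtype_compl, Fintype.card_subtype_eq]
  have hfr2 : Module.finrank ℝ (Submodule.span ℝ (Set.range w)) ≤ Module.finrank ℝ W :=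
    Submodule.finrank_mono hle
  have hfr3 : Module.finrank ℝ W ≤ (pvecs x0 π).card + (pvecs x0 ρ).card := by
    refine (finrank_span_finset_le_card _).trans ?_
    exact Finset.card_union_le _ _
  have hc1 := pvecs_card (x0 := x0) hπ
  have hc2 := pvecs_card (x0 := x0) hρ
  have hN : 1 ≤ Fintype.card S := Fintype.card_pos_iff.mpr ⟨x0⟩
  omega

end helpers

lemma eqvgen_map' {A B : Type*} {r : A → A → Prop} {s : B → B → Prop} (f : A → B)
    (h : ∀ u v, r u v → s (f u) (f v)) :
    ∀ x y, Relation.EqvGen r x y → Relation.EqvGen s (f x) (f y) := by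
  intro x y hxy
  induction hxy with
  | rel u v huv => exact .rel _ _ (h u v huv)
  | refl u => exact .refl _
  | symm u v _ ih => exact .symm _ _ ih
  | trans u v w _ _ ih1 ih2 => exact .trans _ _ _ ih1 ih2

lemma eqvgen_map {A B : Type*} {r : A → A → Prop} {s : B → B → Prop} (f : A → B)
    (h : ∀ u v, r u v → Relation.EqvGen s (f u) (f v)) :
    ∀ x y, Relation.EqvGen r x y → Relation.EqvGen s (f x) (f y) := by
  intro x y hxy
  induction hxy with
  | rel u v huv => exact h u v huv
  | refl u => exact .refl _
  | symm u v _ ih => exact .symm _ _ ih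
  | trans u v w _ _ ih1 ih2 => exact .trans _ _ _ ih1 ih2

section down
variable {m : ℕ} (j : Fin m)

def fdown : Fin (m+1) → Fin m := Fin.lastCases j (fun i => i)

@[simp] lemma fdown_castSucc (i : Fin m) : fdown j (Fin.castSucc i) = i :=
  Fin.lastCases_castSucc i

@[simp] lemma fdown_last : fdown j (Fin.last m) = j := Fin.lastCases_last

lemma fdown_cases (x : Fin (m+1)) : x = Fin.last m ∨ x = Fin.castSucc (fdown j x) := by
  cases x using Fin.lastCases with
  | last => exact Or.inl rfl
  | cast i => exact Or.inr (by simp)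

lemma mem_image_fdown {s : Finset (Fin (m+1))} (hs : Fin.last m ∉ s) {a : Fin m} :
    a ∈ s.image (fdown j) ↔ Fin.castSucc a ∈ s := by
  constructor
  · rintro h
    obtain ⟨x, hx, hfx⟩ := Finset.mem_image.mp h
    rcases fdown_cases j x with h1 | h1
    · exact absurd (h1 ▸ hx) hs
    · rwa [← hfx, ← h1]
  · intro h
    exact Finset.mem_image.mpr ⟨_, h, by simp⟩

lemma mem_image_fdown_last {s : Finset (Fin (m+1))} (hs : Fin.last m ∈ s) {a : Fin m} :
    a ∈ s.image (fdown j) ↔ Fin.castSucc a ∈ s ∨ a = j := by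
  constructor
  · rintro h
    obtain ⟨x, hx, hfx⟩ := Finset.mem_image.mp h
    rcases fdown_cases j x with h1 | h1
    · right; rw [← hfx, h1, fdown_last]
    · left; rwa [← hfx, ← h1]
  · rintro (h | h)
    · exact Finset.mem_image.mpr ⟨_, h, by simp⟩
    · exact Finset.mem_image.mpr ⟨_, hs, by simp [h]⟩

lemma mem_iip_castSucc (p : Finset (Fin m)) (a : Fin m) :
    Fin.castSucc a ∈ (if j ∈ p then insert (Fin.last m) (p.image Fin.castSucc)
      else p.image Fin.castSucc) ↔ a ∈ p := by
  split
  · rw [Finset.mem_insert]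
    simp only [Finset.mem_image]
    constructor
    · rintro (h | ⟨b, hb, hba⟩)
      · exact absurd h (Fin.castSucc_lt_last a).ne
      · rwa [← Fin.castSucc_injective m hba]
    · intro h; exact Or.inr ⟨a, h, rfl⟩
  · simp only [Finset.mem_image]
    constructor
    · rintro ⟨b, hb, hba⟩; rwa [← Fin.castSucc_injective m hba]
    · intro h; exact ⟨a, h, rfl⟩

lemma mem_iip_last (p : Finset (Fin m)) :
    Fin.last m ∈ (if j ∈ p then insert (Fin.last m) (p.image Fin.castSucc)
      else p.image Fin.castSucc) ↔ j ∈ p := by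
  split
  next h => simp [h]
  next h =>
    simp only [Finset.mem_image, h, iff_false]
    rintro ⟨b, hb, hba⟩
    exact absurd hba (Fin.castSucc_lt_last b).ne

lemma card_insertIntoPart {π : Finset (Finset (Fin m))} (hπ : IsPartitionOn π Finset.univ) :
    (insertIntoPart j π).card = π.card := by
  rw [insertIntoPart]
  apply Finset.card_image_of_injOn
  intro p hp p' hp' h
  ext a
  have h1 := mem_iip_castSucc j p a
  have h2 := mem_iip_castSucc j p' a
  simp only at h
  rw [← h1, ← h2, h]
end down

section rt
variable {m : ℕ} (j : Fin m)

lemma pform_trans {S T : Type*} [Fintype S] [DecidableEq S] [Fintype T] [DecidableEq T]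
    {τ₁ ρ₁ : Finset (Finset S)} {τ₂ ρ₂ : Finset (Finset T)}
    (h : (τ₁.card + ρ₁.card = Fintype.card S + 1 ∧
      (∀ x y : S, Relation.EqvGen (fun u v =>
        (∃ p ∈ τ₁, u ∈ p ∧ v ∈ p) ∨ (∃ q ∈ ρ₁, u ∈ q ∧ v ∈ q)) x y)) ↔
      (τ₂.card + ρ₂.card = Fintype.card T + 1 ∧
      (∀ x y : T, Relation.EqvGen (fun u v =>
        (∃ p ∈ τ₂, u ∈ p ∧ v ∈ p) ∨ (∃ q ∈ ρ₂, u ∈ q ∧ v ∈ q)) x y))) :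
    pform τ₁ ρ₁ = pform τ₂ ρ₂ := by
  rw [pform, pform]
  exact if_congr h rfl rfl

variable {ρ' : Finset (Finset (Fin (m+1)))} {q r : Finset (Fin (m+1))}

/-- contraction of `ρ'` along the deletion of the last element, with the part `q`
(containing `last`) merged into the part `r` (containing `castSucc j`). -/
def rhoTilde (j : Fin m) (ρ' : Finset (Finset (Fin (m+1)))) (q r : Finset (Fin (m+1))) :
    Finset (Finset (Fin m)) :=
  insert (q.image (fdown j) ∪ r.image (fdown j))
    (((ρ'.erase q).erase r).image (Finset.image (fdown j)))

variable (hρ' : IsPartitionOn ρ' Finset.univ) (hq : q ∈ ρ') (hr : r ∈ ρ')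
  (hlq : Fin.last m ∈ q) (hjr : Fin.castSucc j ∈ r)

include hρ' hq hr hlq hjr

lemma mem_rest {s : Finset (Fin (m+1))} (hs : s ∈ (ρ'.erase q).erase r) :
    s ∈ ρ' ∧ Fin.last m ∉ s ∧ Fin.castSucc j ∉ s := by
  have hs1 := Finset.mem_of_mem_erase (Finset.mem_of_mem_erase hs)
  have hsr : s ≠ r := Finset.ne_of_mem_erase hs
  have hsq : s ≠ q := Finset.ne_of_mem_erase (Finset.mem_of_mem_erase hs)
  refine ⟨hs1, fun h => hsq (part_unique hρ' hs1 hq h hlq), 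
    fun h => hsr (part_unique hρ' hs1 hr h hjr)⟩

lemma mem_merged (hqr : q ≠ r) {a : Fin m}
    (ha : a ∈ q.image (fdown j) ∪ r.image (fdown j)) :
    Fin.castSucc a ∈ q ∨ Fin.castSucc a ∈ r := by
  have hlr : Fin.last m ∉ r := fun h => hqr (part_unique hρ' hq hr hlq h)
  rcases Finset.mem_union.mp ha with h | h
  · rcases (mem_image_fdown_last j hlq).mp h with h1 | h1
    · exact Or.inl h1
    · exact Or.inr (h1 ▸ hjr)
  · exact Or.inr ((mem_image_fdown j hlr).mp h)

variable {π : Finset (Finset (Fin m))} (hπ : IsPartitionOn π Finset.univ)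
include hπ

/-- the link: `last` is related to `castSucc j` through `π↑j`. -/
lemma link_rel :
    (∃ p ∈ insertIntoPart j π, Fin.last m ∈ p ∧ Fin.castSucc j ∈ p) := by
  obtain ⟨p0, hp0, hjp0⟩ := part_exists hπ j
  refine ⟨_, Finset.mem_image_of_mem _ hp0, ?_, ?_⟩
  · exact (mem_iip_last j p0).mpr hjp0
  · exact (mem_iip_castSucc j p0 j).mpr hjp0

lemma qr_conn {u : Fin (m+1)} (hu : u ∈ q ∨ u ∈ r) :
    Relation.EqvGen (fun u v =>
      (∃ p ∈ insertIntoPart j π, u ∈ p ∧ v ∈ p) ∨ (∃ s ∈ ρ', u ∈ s ∧ v ∈ s))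
      u (Fin.castSucc j) := by
  have hlink := link_rel j hρ' hq hr hlq hjr hπ
  rcases hu with h | h
  · exact .trans _ _ _ (.rel _ _ (Or.inr ⟨q, hq, h, hlq⟩)) (.rel _ _ (Or.inl hlink))
  · exact .rel _ _ (Or.inr ⟨r, hr, h, hjr⟩)

lemma rup_to_rdn (hqr : q ≠ r) {u v : Fin (m+1)}
    (h : (∃ p ∈ insertIntoPart j π, u ∈ p ∧ v ∈ p) ∨ (∃ s ∈ ρ', u ∈ s ∧ v ∈ s)) :
    (∃ p ∈ π, fdown j u ∈ p ∧ fdown j v ∈ p) ∨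
      (∃ s ∈ rhoTilde j ρ' q r, fdown j u ∈ s ∧ fdown j v ∈ s) := by
  have key : ∀ (p0 : Finset (Fin m)) (x : Fin (m+1)),
      x ∈ (if j ∈ p0 then insert (Fin.last m) (p0.image Fin.castSucc)
        else p0.image Fin.castSucc) → fdown j x ∈ p0 := by
    intro p0 x hx
    rcases fdown_cases j x with h1 | h1
    · subst h1; rw [fdown_last]; exact (mem_iip_last j p0).mp hx
    · rw [h1] at hx; rw [h1, fdown_castSucc] at *
      exact (mem_iip_castSucc j p0 _).mp hx
  rcases h with ⟨p, hp, hu, hv⟩ | ⟨s, hs, hu, hv⟩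
  · obtain ⟨p0, hp0, rfl⟩ := Finset.mem_image.mp hp
    exact Or.inl ⟨p0, hp0, key p0 u hu, key p0 v hv⟩
  · right
    by_cases hsq : s = q
    · subst hsq
      exact ⟨_, Finset.mem_insert_self _ _,
        Finset.mem_union_left _ (Finset.mem_image_of_mem _ hu),
        Finset.mem_union_left _ (Finset.mem_image_of_mem _ hv)⟩
    by_cases hsr : s = r
    · subst hsr
      exact ⟨_, Finset.mem_insert_self _ _,
        Finset.mem_union_right _ (Finset.mem_image_of_mem _ hu),
        Finset.mem_union_right _ (Finset.mem_image_of_mem _ hv)⟩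
    · refine ⟨s.image (fdown j), ?_, Finset.mem_image_of_mem _ hu,
        Finset.mem_image_of_mem _ hv⟩
      exact Finset.mem_insert_of_mem (Finset.mem_image_of_mem _
        (Finset.mem_erase.mpr ⟨hsr, Finset.mem_erase.mpr ⟨hsq, hs⟩⟩))

lemma rdn_to_rup (hqr : q ≠ r) {a b : Fin m}
    (h : (∃ p ∈ π, a ∈ p ∧ b ∈ p) ∨ (∃ s ∈ rhoTilde j ρ' q r, a ∈ s ∧ b ∈ s)) :
    Relation.EqvGen (fun u v =>
      (∃ p ∈ insertIntoPart j π, u ∈ p ∧ v ∈ p) ∨ (∃ s ∈ ρ', u ∈ s ∧ v ∈ s))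
      (Fin.castSucc a) (Fin.castSucc b) := by
  rcases h with ⟨p, hp, ha, hb⟩ | ⟨s, hs, ha, hb⟩
  · refine .rel _ _ (Or.inl ⟨_, Finset.mem_image_of_mem _ hp,
      (mem_iip_castSucc j p a).mpr ha, (mem_iip_castSucc j p b).mpr hb⟩)
  · rcases Finset.mem_insert.mp hs with h1 | h1
    · subst h1
      have ha' := mem_merged j hρ' hq hr hlq hjr hqr ha
      have hb' := mem_merged j hρ' hq hr hlq hjr hqr hb
      exact .trans _ _ _ (qr_conn j hρ' hq hr hlq hjr hπ ha')
        (.symm _ _ (qr_conn j hρ' hq hr hlq hjr hπ hb'))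
    · obtain ⟨s0, hs0, rfl⟩ := Finset.mem_image.mp h1
      obtain ⟨hs1, hls, hjs⟩ := mem_rest j hρ' hq hr hlq hjr hs0
      exact .rel _ _ (Or.inr ⟨s0, hs1,
        (mem_image_fdown j hls).mp ha, (mem_image_fdown j hls).mp hb⟩)

lemma conn_iff (hqr : q ≠ r) :
    (∀ x y : Fin (m+1), Relation.EqvGen (fun u v =>
      (∃ p ∈ insertIntoPart j π, u ∈ p ∧ v ∈ p) ∨ (∃ s ∈ ρ', u ∈ s ∧ v ∈ s)) x y) ↔
    (∀ a b : Fin m, Relation.EqvGen (fun u v =>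
      (∃ p ∈ π, u ∈ p ∧ v ∈ p) ∨ (∃ s ∈ rhoTilde j ρ' q r, u ∈ s ∧ v ∈ s)) a b) := by
  constructor
  · intro h a b
    have := eqvgen_map' (s := fun a b => (∃ p ∈ π, a ∈ p ∧ b ∈ p) ∨
        (∃ s ∈ rhoTilde j ρ' q r, a ∈ s ∧ b ∈ s)) (fdown j)
      (fun u v huv => rup_to_rdn j hρ' hq hr hlq hjr hπ hqr huv) _ _
      (h (Fin.castSucc a) (Fin.castSucc b))
    simpa using this
  · intro h x y
    have lift : ∀ a b : Fin m, Relation.EqvGen (fun u v =>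
        (∃ p ∈ π, u ∈ p ∧ v ∈ p) ∨ (∃ s ∈ rhoTilde j ρ' q r, u ∈ s ∧ v ∈ s)) a b →
        Relation.EqvGen (fun u v =>
        (∃ p ∈ insertIntoPart j π, u ∈ p ∧ v ∈ p) ∨ (∃ s ∈ ρ', u ∈ s ∧ v ∈ s))
        (Fin.castSucc a) (Fin.castSucc b) := by
      intro a b hab
      induction hab with
      | rel u v huv => exact rdn_to_rup j hρ' hq hr hlq hjr hπ hqr huv
      | refl u => exact .refl _
      | symm u v _ ih => exact .symm _ _ ih
      | trans u v w _ _ ih1 ih2 => exact .trans _ _ _ ih1 ih2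
    have hx : ∀ z : Fin (m+1), Relation.EqvGen (fun u v =>
        (∃ p ∈ insertIntoPart j π, u ∈ p ∧ v ∈ p) ∨ (∃ s ∈ ρ', u ∈ s ∧ v ∈ s))
        z (Fin.castSucc (fdown j z)) := by
      intro z
      rcases fdown_cases j z with h1 | h1
      · subst h1
        rw [fdown_last]
        exact .rel _ _ (Or.inl (link_rel j hρ' hq hr hlq hjr hπ))
      · rw [← h1]; exact .refl _
    exact .trans _ _ _ (hx x) (.trans _ _ _ (lift _ _ (h _ _)) (.symm _ _ (hx y)))
end rt

section cards
variable {m : ℕ} (j : Fin m) {ρ' : Finset (Finset (Fin (m+1)))} {q r : Finset (Fin (m+1))}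

lemma fdown_collision {x y : Fin (m+1)} (h : fdown j x = fdown j y) :
    x = y ∨ ((x = Fin.last m ∨ x = Fin.castSucc j) ∧
             (y = Fin.last m ∨ y = Fin.castSucc j)) := by
  cases x using Fin.lastCases with
  | last =>
    cases y using Fin.lastCases with
    | last => exact Or.inl rfl
    | cast i =>
      simp only [fdown_last, fdown_castSucc] at h
      exact Or.inr ⟨Or.inl rfl, Or.inr (congrArg Fin.castSucc h.symm)⟩
  | cast i =>
    cases y using Fin.lastCases with
    | last =>
      simp only [fdown_last, fdown_castSucc] at h
      exact Or.inr ⟨Or.inr (congrArg Fin.castSucc h), Or.inl rfl⟩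
    | cast i' =>
      simp only [fdown_castSucc] at h
      exact Or.inl (congrArg Fin.castSucc h)

variable (hρ' : IsPartitionOn ρ' Finset.univ)
include hρ'

lemma image_fdown_disjoint {s t : Finset (Fin (m+1))} (hs : s ∈ ρ') (ht : t ∈ ρ')
    (hst : s ≠ t) (h1 : ¬(Fin.last m ∈ s ∧ Fin.castSucc j ∈ t))
    (h2 : ¬(Fin.last m ∈ t ∧ Fin.castSucc j ∈ s)) :
    Disjoint (s.image (fdown j)) (t.image (fdown j)) := by
  rw [Finset.disjoint_left]
  rintro a has hat
  obtain ⟨x, hx, hfx⟩ := Finset.mem_image.mp has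
  obtain ⟨y, hy, hfy⟩ := Finset.mem_image.mp hat
  rcases fdown_collision j (hfx.trans hfy.symm) with h | ⟨hx', hy'⟩
  · exact hst (part_unique hρ' hs ht hx (h ▸ hy))
  · rcases hx' with h3 | h3 <;> rcases hy' with h4 | h4
    · exact hst (part_unique hρ' hs ht hx (by rw [h3, ← h4]; exact hy))
    · exact h1 ⟨h3 ▸ hx, h4 ▸ hy⟩
    · exact h2 ⟨h4 ▸ hy, h3 ▸ hx⟩
    · exact hst (part_unique hρ' hs ht hx (by rw [h3, ← h4]; exact hy))

variable (hq : q ∈ ρ') (hr : r ∈ ρ') (hlq : Fin.last m ∈ q) (hjr : Fin.castSucc j ∈ r)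
include hq hr hlq hjr

lemma merged_notMem_rest (hqr : q ≠ r) :
    q.image (fdown j) ∪ r.image (fdown j) ∉
      ((ρ'.erase q).erase r).image (Finset.image (fdown j)) := by
  intro h
  obtain ⟨s, hs, hsim⟩ := Finset.mem_image.mp h
  obtain ⟨hs1, hls, hjs⟩ := mem_rest j hρ' hq hr hlq hjr hs
  have hj : j ∈ s.image (fdown j) := by
    rw [hsim]
    exact Finset.mem_union_left _ (Finset.mem_image.mpr ⟨_, hlq, fdown_last j⟩)
  exact hjs ((mem_image_fdown j hls).mp hj)

lemma card_rhoTilde (hqr : q ≠ r) : (rhoTilde j ρ' q r).card + 1 = ρ'.card := by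
  have h2 : r ∈ ρ'.erase q := Finset.mem_erase.mpr ⟨Ne.symm hqr, hr⟩
  have e1 : ((ρ'.erase q).erase r).card + 1 = (ρ'.erase q).card :=
    Finset.card_erase_add_one h2
  have e2 : (ρ'.erase q).card + 1 = ρ'.card := Finset.card_erase_add_one hq
  have e3 : (((ρ'.erase q).erase r).image (Finset.image (fdown j))).card
      = ((ρ'.erase q).erase r).card := by
    apply Finset.card_image_of_injOn
    intro s hs t ht him
    by_contra hst
    obtain ⟨hs1, hls, hjs⟩ := mem_rest j hρ' hq hr hlq hjr hs
    obtain ⟨ht1, hlt, hjt⟩ := mem_rest j hρ' hq hr hlq hjr ht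
    have hd := image_fdown_disjoint j hρ' hs1 ht1 hst (fun h => hls h.1) (fun h => hlt h.1)
    obtain ⟨x, hx⟩ := hρ'.1 s hs1
    have hm : fdown j x ∈ s.image (fdown j) := Finset.mem_image_of_mem _ hx
    exact (Finset.disjoint_left.mp hd hm) (him ▸ hm)
  rw [rhoTilde, Finset.card_insert_of_notMem (merged_notMem_rest j hρ' hq hr hlq hjr hqr), e3]
  omega

lemma rhoTilde_partition (hqr : q ≠ r) :
    IsPartitionOn (rhoTilde j ρ' q r) Finset.univ := by
  have hmd : ∀ s ∈ (ρ'.erase q).erase r,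
      Disjoint (q.image (fdown j) ∪ r.image (fdown j)) (s.image (fdown j)) := by
    intro s hs
    obtain ⟨hs1, hls, hjs⟩ := mem_rest j hρ' hq hr hlq hjr hs
    rw [Finset.disjoint_left]
    intro a ha has
    have h1 := mem_merged j hρ' hq hr hlq hjr hqr ha
    have h2 := (mem_image_fdown j hls).mp has
    rcases h1 with h | h
    · exact hls (by rw [part_unique hρ' hs1 hq h2 h]; exact hlq)
    · exact hjs (by rw [part_unique hρ' hs1 hr h2 h]; exact hjr)
  refine ⟨?_, ?_, ?_⟩
  · intro p hp
    rcases Finset.mem_insert.mp hp with h | h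
    · exact ⟨j, h ▸ Finset.mem_union_left _ (Finset.mem_image.mpr ⟨_, hlq, fdown_last j⟩)⟩
    · obtain ⟨s, hs, rfl⟩ := Finset.mem_image.mp h
      exact (hρ'.1 s (mem_rest j hρ' hq hr hlq hjr hs).1).image _
  · intro p hp p2 hp2 hne
    rcases Finset.mem_insert.mp hp with h | h <;> rcases Finset.mem_insert.mp hp2 with h' | h'
    · exact absurd (h.trans h'.symm) hne
    · subst h; obtain ⟨s, hs, rfl⟩ := Finset.mem_image.mp h'; exact hmd s hs
    · subst h'; obtain ⟨s, hs, rfl⟩ := Finset.mem_image.mp h; exact (hmd s hs).symm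
    · obtain ⟨s, hs, rfl⟩ := Finset.mem_image.mp h
      obtain ⟨t, ht, rfl⟩ := Finset.mem_image.mp h'
      have hst : s ≠ t := fun hh => hne (by rw [hh])
      obtain ⟨hs1, hls, hjs⟩ := mem_rest j hρ' hq hr hlq hjr hs
      obtain ⟨ht1, hlt, hjt⟩ := mem_rest j hρ' hq hr hlq hjr ht
      exact image_fdown_disjoint j hρ' hs1 ht1 hst (fun hh => hls hh.1) (fun hh => hlt hh.1)
  · apply Finset.eq_univ_of_forall
    intro a
    rw [Finset.mem_biUnion]
    obtain ⟨s, hs, has⟩ := part_exists hρ' (Fin.castSucc a)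
    by_cases hsq : s = q
    · exact ⟨_, Finset.mem_insert_self _ _, Finset.mem_union_left _
        (Finset.mem_image.mpr ⟨_, hsq ▸ has, fdown_castSucc j a⟩)⟩
    by_cases hsr : s = r
    · exact ⟨_, Finset.mem_insert_self _ _, Finset.mem_union_right _
        (Finset.mem_image.mpr ⟨_, hsr ▸ has, fdown_castSucc j a⟩)⟩
    · exact ⟨s.image (fdown j), Finset.mem_insert_of_mem (Finset.mem_image_of_mem _
        (Finset.mem_erase.mpr ⟨hsr, Finset.mem_erase.mpr ⟨hsq, hs⟩⟩)),
        Finset.mem_image.mpr ⟨_, has, fdown_castSucc j a⟩⟩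
end cards

section caseB
variable {m : ℕ} (j : Fin m) {ρ' : Finset (Finset (Fin (m+1)))} {q : Finset (Fin (m+1))}
variable (hρ' : IsPartitionOn ρ' Finset.univ) (hq : q ∈ ρ')
  (hlq : Fin.last m ∈ q) (hjq : Fin.castSucc j ∈ q)
include hρ' hq hlq hjq

lemma rhoBar_partition : IsPartitionOn (ρ'.image (Finset.image (fdown j))) Finset.univ := by
  refine ⟨?_, ?_, ?_⟩
  · intro p hp
    obtain ⟨s, hs, rfl⟩ := Finset.mem_image.mp hp
    exact (hρ'.1 s hs).image _
  · intro p hp p2 hp2 hne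
    obtain ⟨s, hs, rfl⟩ := Finset.mem_image.mp hp
    obtain ⟨t, ht, rfl⟩ := Finset.mem_image.mp hp2
    have hst : s ≠ t := fun hh => hne (by rw [hh])
    refine image_fdown_disjoint j hρ' hs ht hst (fun hh => ?_) (fun hh => ?_)
    · exact hst ((part_unique hρ' hs hq hh.1 hlq).trans (part_unique hρ' ht hq hh.2 hjq).symm)
    · exact hst ((part_unique hρ' hs hq hh.2 hjq).trans (part_unique hρ' ht hq hh.1 hlq).symm)
  · apply Finset.eq_univ_of_forall
    intro a
    rw [Finset.mem_biUnion]
    obtain ⟨s, hs, has⟩ := part_exists hρ' (Fin.castSucc a)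
    exact ⟨s.image (fdown j), Finset.mem_image_of_mem _ hs,
      Finset.mem_image.mpr ⟨_, has, fdown_castSucc j a⟩⟩

lemma rhoBar_card : (ρ'.image (Finset.image (fdown j))).card = ρ'.card := by
  apply Finset.card_image_of_injOn
  intro s hs t ht him
  by_contra hst
  have hd : Disjoint (s.image (fdown j)) (t.image (fdown j)) := by
    refine image_fdown_disjoint j hρ' hs ht hst (fun hh => ?_) (fun hh => ?_)
    · exact hst ((part_unique hρ' hs hq hh.1 hlq).trans (part_unique hρ' ht hq hh.2 hjq).symm)
    · exact hst ((part_unique hρ' hs hq hh.2 hjq).trans (part_unique hρ' ht hq hh.1 hlq).symm)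
  obtain ⟨x, hx⟩ := hρ'.1 s hs
  have hm : fdown j x ∈ s.image (fdown j) := Finset.mem_image_of_mem _ hx
  exact (Finset.disjoint_left.mp hd hm) (him ▸ hm)

variable {π : Finset (Finset (Fin m))} (hπ : IsPartitionOn π Finset.univ)
include hπ

lemma pform_zero : pform (insertIntoPart j π) ρ' = 0 := by
  rw [pform, if_neg]
  rintro ⟨hcard, hconn⟩
  have hcard2 : π.card + ρ'.card = m + 2 := by
    rw [card_insertIntoPart j hπ, Fintype.card_fin] at hcard
    omega
  have key : ∀ (p0 : Finset (Fin m)) (x : Fin (m+1)),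
      x ∈ (if j ∈ p0 then insert (Fin.last m) (p0.image Fin.castSucc)
        else p0.image Fin.castSucc) → fdown j x ∈ p0 := by
    intro p0 x hx
    rcases fdown_cases j x with h1 | h1
    · subst h1; rw [fdown_last]; exact (mem_iip_last j p0).mp hx
    · rw [h1] at hx; rw [h1, fdown_castSucc] at *
      exact (mem_iip_castSucc j p0 _).mp hx
  have hconn2 : ∀ a b : Fin m, Relation.EqvGen (fun u v =>
      (∃ p ∈ π, u ∈ p ∧ v ∈ p) ∨
      (∃ s ∈ ρ'.image (Finset.image (fdown j)), u ∈ s ∧ v ∈ s)) a b := by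
    intro a b
    have := eqvgen_map' (s := fun a b => (∃ p ∈ π, a ∈ p ∧ b ∈ p) ∨
        (∃ s ∈ ρ'.image (Finset.image (fdown j)), a ∈ s ∧ b ∈ s)) (fdown j)
      (fun u v huv => by
        rcases huv with ⟨p, hp, hu, hv⟩ | ⟨s, hs, hu, hv⟩
        · obtain ⟨p0, hp0, rfl⟩ := Finset.mem_image.mp hp
          exact Or.inl ⟨p0, hp0, key p0 u hu, key p0 v hv⟩
        · exact Or.inr ⟨s.image (fdown j), Finset.mem_image_of_mem _ hs,
            Finset.mem_image_of_mem _ hu, Finset.mem_image_of_mem _ hv⟩) _ _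
      (hconn (Fin.castSucc a) (Fin.castSucc b))
    simpa using this
  have hb := forest_bound j hπ (rhoBar_partition j hρ' hq hlq hjq) hconn2
  rw [rhoBar_card j hρ' hq hlq hjq, Fintype.card_fin] at hb
  omega
end caseB

/-- (With `n = m + 1 ≥ 2`, so that `1 ≤ j < n` means `j : Fin m`.)
Let `τ` be a partition of `{1,…,m}` and `(α_σ)` real coefficients indexed by the
partitions `σ` of `{1,…,m}` such that `⟨τ,ρ⟩ = Σ_σ α_σ ⟨σ,ρ⟩` for every partition `ρ`
of `{1,…,m}`.  Then for every partition `ρ'` of `{1,…,m+1}`: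
`⟨τ↑j, ρ'⟩ = Σ_σ α_σ ⟨σ↑j, ρ'⟩`, where `π↑j` inserts the new element `m+1` into the
part of `π` containing `j`. -/
theorem equivalence_extends_by_insertion (m : ℕ) (hm : 1 ≤ m) (j : Fin m)
    (τ : Finset (Finset (Fin m))) (hτ : IsPartitionOn τ Finset.univ)
    (α : Finset (Finset (Fin m)) → ℝ)
    (hα : ∀ ρ : Finset (Finset (Fin m)), IsPartitionOn ρ Finset.univ →
      pform τ ρ = ∑ σ ∈ Finset.univ.filter
        (fun σ : Finset (Finset (Fin m)) => IsPartitionOn σ Finset.univ),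
        α σ * pform σ ρ)
    (ρ' : Finset (Finset (Fin (m+1)))) (hρ' : IsPartitionOn ρ' Finset.univ) :
    pform (insertIntoPart j τ) ρ' = ∑ σ ∈ Finset.univ.filter
        (fun σ : Finset (Finset (Fin m)) => IsPartitionOn σ Finset.univ),
        α σ * pform (insertIntoPart j σ) ρ' := by
  obtain ⟨q, hq, hlq⟩ := part_exists hρ' (Fin.last m)
  obtain ⟨r, hr, hjr⟩ := part_exists hρ' (Fin.castSucc j)
  by_cases hqr : q = r
  · -- degenerate case: `last` and `castSucc j` lie in the same part of `ρ'`
    have hjq : Fin.castSucc j ∈ q := hqr ▸ hjr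
    rw [pform_zero j hρ' hq hlq hjq hτ]
    symm
    apply Finset.sum_eq_zero
    intro σ hσ
    rw [pform_zero j hρ' hq hlq hjq (Finset.mem_filter.mp hσ).2, mul_zero]
  · -- main case: contract `last` into the part of `j`
    have hT := rhoTilde_partition j hρ' hq hr hlq hjr hqr
    have hTc := card_rhoTilde j hρ' hq hr hlq hjr hqr
    have key : ∀ π : Finset (Finset (Fin m)), IsPartitionOn π Finset.univ →
        pform (insertIntoPart j π) ρ' = pform π (rhoTilde j ρ' q r) := by
      intro π hπ
      apply pform_trans
      apply and_congr
      · rw [card_insertIntoPart j hπ, Fintype.card_fin, Fintype.card_fin]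
        omega
      · exact conn_iff j hρ' hq hr hlq hjr hπ hqr
    rw [key τ hτ, hα _ hT]
    apply Finset.sum_congr rfl
    intro σ hσ
    rw [key σ (Finset.mem_filter.mp hσ).2]
end
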